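/- arXiv:1910.06162 — 8 statements merged into one kernel-verified Lean document; each statement's English description precedes it below -/
import Mathlib

section
/- A finite poset is series-parallel (i.e., generated from the singleton poset by finitely many serial and parallel compositions) if and only if it does not contain an induced subposet isomorphic to N, the four-element poset {a,b,c,d} with a<b, c<b, c<d and no other strict relations. -/
/-- A bundled finite poset. -/
structure FPoset where
  carrier : Type
  [str : PartialOrder carrier]
  [fin : Fintype carrier]

attribute [instance] FPoset.str FPoset.fin

/-- `IsSer P Q R`: `R` is (a realization of) the serial composition `P ; Q`,
the disjoint union of `P` and `Q` with every point of `P` below every point of `Q`. -/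
def IsSer (P Q R : FPoset) : Prop :=
  ∃ (ip : P.carrier → R.carrier) (iq : Q.carrier → R.carrier),
    Function.Injective ip ∧ Function.Injective iq ∧
    (∀ (x : P.carrier) (y : Q.carrier), ip x ≠ iq y) ∧
    (∀ r : R.carrier, (∃ x, r = ip x) ∨ (∃ y, r = iq y)) ∧
    (∀ u v : R.carrier, u ≤ v ↔
      ((∃ x y : P.carrier, u = ip x ∧ v = ip y ∧ x ≤ y) ∨
       (∃ x y : Q.carrier, u = iq x ∧ v = iq y ∧ x ≤ y) ∨
       (∃ (x : P.carrier) (y : Q.carrier), u = ip x ∧ v = iq y)))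

/-- `IsPar P Q R`: `R` is (a realization of) the parallel composition `P ⊗ Q`,
the disjoint union of `P` and `Q` with no relations across. -/
def IsPar (P Q R : FPoset) : Prop :=
  ∃ (ip : P.carrier → R.carrier) (iq : Q.carrier → R.carrier),
    Function.Injective ip ∧ Function.Injective iq ∧
    (∀ (x : P.carrier) (y : Q.carrier), ip x ≠ iq y) ∧
    (∀ r : R.carrier, (∃ x, r = ip x) ∨ (∃ y, r = iq y)) ∧
    (∀ u v : R.carrier, u ≤ v ↔
      ((∃ x y : P.carrier, u = ip x ∧ v = ip y ∧ x ≤ y) ∨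
       (∃ x y : Q.carrier, u = iq x ∧ v = iq y ∧ x ≤ y)))

/-- Series-parallel posets: generated from the empty and singleton posets by
finitely many serial and parallel compositions (up to isomorphism, which is
built into the specifications `IsSer`, `IsPar`). -/
inductive SP : FPoset → Prop
  | empty {P : FPoset} : IsEmpty P.carrier → SP P
  | single {P : FPoset} : (∃ x : P.carrier, ∀ y : P.carrier, y = x) → SP P
  | ser {P Q R : FPoset} : SP P → SP Q → IsSer P Q R → SP R
  | par {P Q R : FPoset} : SP P → SP Q → IsPar P Q R → SP R

/-- `P` contains an induced subposet isomorphic to N: four elements `a,b,c,d`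
with `a<b`, `c<b`, `c<d` and no other strict relations. -/
def HasN (P : FPoset) : Prop :=
  ∃ a b c d : P.carrier,
    a < b ∧ c < b ∧ c < d ∧
    ¬ a ≤ c ∧ ¬ c ≤ a ∧ ¬ a ≤ d ∧ ¬ d ≤ a ∧ ¬ b ≤ d ∧ ¬ d ≤ b


/-!
An `N` cannot straddle a serial or a parallel composition, because it is connected both in its
comparability graph and in its incomparability graph. Conversely, the comparability graph of an
`N`-free poset has no induced path on four vertices, so by Seinsche's theorem either it or its
complement is disconnected. A comparability component splits the poset in parallel; an
incomparability component `C` splits it in series, since every point outside `C` lies either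
above all of `C` or below all of `C`.
-/

def IsNQuad {α : Type*} [Preorder α] (a b c d : α) : Prop :=
  a < b ∧ c < b ∧ c < d ∧ ¬ a ≤ c ∧ ¬ c ≤ a ∧ ¬ a ≤ d ∧ ¬ d ≤ a ∧ ¬ b ≤ d ∧ ¬ d ≤ b

def NFree (α : Type*) [Preorder α] : Prop := ∀ a b c d : α, ¬ IsNQuad a b c d

lemma not_hasN_iff (P : FPoset) : ¬ HasN P ↔ NFree P.carrier := by
  simp only [HasN, NFree, IsNQuad, not_exists]

section NFree

variable {α β : Type*} [Preorder α] [Preorder β]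

lemma NFree.of_orderEmbedding (f : α ↪o β) (h : NFree β) : NFree α := by
  intro a b c d hN
  apply h (f a) (f b) (f c) (f d)
  simpa [IsNQuad] using hN

lemma NFree.sum (hα : NFree α) (hβ : NFree β) : NFree (α ⊕ β) := by
  rintro (a | a) (b | b) (c | c) (d | d) hN
  all_goals first
    | exact hα a b c d (by simpa [IsNQuad] using hN)
    | exact hβ a b c d (by simpa [IsNQuad] using hN)
    | simp [IsNQuad] at hN

lemma NFree.sumLex (hα : NFree α) (hβ : NFree β) : NFree (α ⊕ₗ β) := by
  suffices ∀ a b c d : α ⊕ β, ¬ IsNQuad (toLex a) (toLex b) (toLex c) (toLex d) from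
    fun a b c d => this (ofLex a) (ofLex b) (ofLex c) (ofLex d)
  rintro (a | a) (b | b) (c | c) (d | d) hN
  all_goals first
    | exact hα a b c d (by simpa [IsNQuad] using hN)
    | exact hβ a b c d (by simpa [IsNQuad] using hN)
    | simp [IsNQuad] at hN

end NFree

lemma Function.bijective_sumElim {α β γ : Type*} {f : α → γ} {g : β → γ}
    (hf : Function.Injective f) (hg : Function.Injective g) (hfg : ∀ a b, f a ≠ g b)
    (hcover : ∀ c, (∃ a, c = f a) ∨ (∃ b, c = g b)) : Function.Bijective (Sum.elim f g) := by
  refine ⟨hf.sumElim hg hfg, fun c => ?_⟩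
  rcases hcover c with ⟨a, rfl⟩ | ⟨b, rfl⟩
  exacts [⟨.inl a, rfl⟩, ⟨.inr b, rfl⟩]

lemma IsPar.nonempty_orderIso {P Q R : FPoset} (h : IsPar P Q R) :
    Nonempty (P.carrier ⊕ Q.carrier ≃o R.carrier) := by
  obtain ⟨ip, iq, hip, hiq, hdisj, hcover, hle⟩ := h
  refine ⟨⟨Equiv.ofBijective _ (Function.bijective_sumElim hip hiq hdisj hcover), ?_⟩⟩
  rintro (x | x) (y | y) <;> simp [hle, hip.eq_iff, hiq.eq_iff, hdisj, (hdisj _ _).symm]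

lemma IsSer.nonempty_orderIso {P Q R : FPoset} (h : IsSer P Q R) :
    Nonempty (P.carrier ⊕ₗ Q.carrier ≃o R.carrier) := by
  obtain ⟨ip, iq, hip, hiq, hdisj, hcover, hle⟩ := h
  refine ⟨⟨ofLex.trans (Equiv.ofBijective _ (Function.bijective_sumElim hip hiq hdisj hcover)),
    fun {a b} => ?_⟩⟩
  obtain ⟨x | x, rfl⟩ := toLex.surjective a <;> obtain ⟨y | y, rfl⟩ := toLex.surjective b <;>
    simp [hle, hip.eq_iff, hiq.eq_iff, hdisj, (hdisj _ _).symm]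

lemma nFree_of_sp {P : FPoset} (h : SP P) : NFree P.carrier := by
  induction h with
  | empty hP => exact fun a => hP.elim a
  | single hP =>
    obtain ⟨x, hx⟩ := hP
    intro a b _ _ hN
    exact hN.1.ne ((hx a).trans (hx b).symm)
  | ser _ _ h ihP ihQ =>
    obtain ⟨e⟩ := h.nonempty_orderIso
    exact (ihP.sumLex ihQ).of_orderEmbedding e.symm.toOrderEmbedding
  | par _ _ h ihP ihQ =>
    obtain ⟨e⟩ := h.nonempty_orderIso
    exact (ihP.sum ihQ).of_orderEmbedding e.symm.toOrderEmbedding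

namespace SimpleGraph

variable {V : Type*} {G : SimpleGraph V}

variable (G) in
def IsP4Free : Prop :=
  ∀ ⦃a b c d : V⦄, G.Adj a b → G.Adj b c → G.Adj c d → G.Adj a c ∨ G.Adj b d ∨ G.Adj a d

lemma IsP4Free.compl (hG : G.IsP4Free) : Gᶜ.IsP4Free := by
  intro a b c d hab hbc hcd
  by_contra! h
  simp only [compl_adj] at *
  -- the complement of the path `a b c d` is the path `b d a c`
  have := @hG b d a c
  grind [adj_comm]

lemma IsP4Free.induce (hG : G.IsP4Free) (s : Set V) : (G.induce s).IsP4Free :=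
  fun _ _ _ _ => @hG _ _ _ _

lemma compl_induce (s : Set V) : (G.induce s)ᶜ = Gᶜ.induce s := by
  ext u v
  simp [Subtype.ext_iff]

lemma not_preconnected_compl_of_forall_adj {v x : V} (hx : x ≠ v) (hv : ∀ w ≠ v, G.Adj v w) :
    ¬ Gᶜ.Preconnected := by
  intro h
  obtain ⟨p⟩ := h v x
  cases p with
  | nil => exact hx rfl
  | cons h _ => exact ((compl_adj _ _ _).1 h).2 (hv _ ((compl_adj _ _ _).1 h).1.symm)

lemma not_preconnected_of_forall_reachable_not_adj {v : V} (w : ({v}ᶜ : Set V))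
    (hw : ∀ u, (G.induce {v}ᶜ).Reachable w u → ¬ G.Adj v u) : ¬ G.Preconnected := by
  intro h
  suffices ∀ x, Relation.ReflTransGen G.Adj w x →
      ∃ hx : x ≠ v, (G.induce {v}ᶜ).Reachable w ⟨x, hx⟩ from
    (this v ((reachable_iff_reflTransGen _ _).1 (h _ _))).1 rfl
  intro x hwx
  induction hwx with
  | refl => exact ⟨w.2, .rfl⟩
  | @tail y x _ hyx ih =>
    obtain ⟨hyv, hwy⟩ := ih
    have hxv : x ≠ v := by
      rintro rfl
      exact hw _ hwy hyx.symm
    exact ⟨hxv, hwy.trans (Adj.reachable (G := G.induce {v}ᶜ) hyx)⟩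

lemma IsP4Free.forall_adj_of_forall_reachable_adj (hG : G.IsP4Free) {v : V}
    (hH : ¬ (G.induce {v}ᶜ).Preconnected)
    (hv : ∀ u, ∃ a, (G.induce {v}ᶜ).Reachable u a ∧ G.Adj v a) : ∀ u ≠ v, G.Adj v u := by
  classical
  set H := G.induce {v}ᶜ
  intro u hu
  by_contra hvu
  -- Along a walk from `u` to a neighbour of `v`, adjacency to `v` switches on at an edge `p q`.
  -- A neighbour `e` of `v` outside the component of `u` then makes `p q v e` an induced P4.
  obtain ⟨a, ⟨walk⟩, hva⟩ := hv ⟨u, hu⟩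
  obtain ⟨⟨⟨p, q⟩, hpq⟩, hd, hvp, hvq⟩ :=
    walk.exists_boundary_dart {p | ¬ G.Adj v p} hvu (by simpa using hva)
  have hup : H.Reachable ⟨u, hu⟩ p :=
    ⟨walk.takeUntil p (walk.dart_fst_mem_support_of_mem_darts hd)⟩
  obtain ⟨z, hz⟩ : ∃ z, ¬ H.Reachable ⟨u, hu⟩ z := by
    by_contra! h
    exact hH fun x y => (h x).symm.trans (h y)
  obtain ⟨e, hze, hve⟩ := hv z
  have hue : ¬ H.Reachable ⟨u, hu⟩ e := fun h => hz (h.trans hze.symm)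
  rcases hG hpq (not_not.1 hvq).symm hve with hpv | hqe | hpe
  · exact hvp hpv.symm
  · exact hue ((hup.trans hpq.reachable).trans (Adj.reachable (G := H) hqe))
  · exact hue (hup.trans (Adj.reachable (G := H) hpe))

lemma IsP4Free.not_preconnected_or_not_preconnected_compl_of_induce (hG : G.IsP4Free) {v : V}
    (hH : ¬ (G.induce {v}ᶜ).Preconnected) : ¬ G.Preconnected ∨ ¬ Gᶜ.Preconnected := by
  by_cases hw : ∃ w, ∀ u, (G.induce {v}ᶜ).Reachable w u → ¬ G.Adj v u
  · obtain ⟨w, hw⟩ := hw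
    exact .inl (not_preconnected_of_forall_reachable_not_adj w hw)
  · push Not at hw
    obtain ⟨x, -, -⟩ : ∃ x y, ¬ (G.induce {v}ᶜ).Reachable x y := by
      simpa [Preconnected] using hH
    exact .inr (not_preconnected_compl_of_forall_adj x.2
      (hG.forall_adj_of_forall_reachable_adj hH hw))

theorem IsP4Free.not_preconnected_or_not_preconnected_compl {V : Type*} [Finite V]
    [Nontrivial V] {G : SimpleGraph V} (hG : G.IsP4Free) :
    ¬ G.Preconnected ∨ ¬ Gᶜ.Preconnected := by
  induction h : Nat.card V generalizing V with
  | zero => exact absurd h Nat.card_pos.ne'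
  | succ n ih =>
    obtain ⟨v⟩ : Nonempty V := inferInstance
    obtain ⟨x, hx⟩ := exists_ne v
    by_cases hW : Nontrivial ({v}ᶜ : Set V)
    · have hcard : Nat.card ({v}ᶜ : Set V) = n := by
        rw [Nat.card_coe_set_eq, Set.ncard_compl, Set.ncard_singleton, h, Nat.add_sub_cancel]
      rcases ih (hG.induce {v}ᶜ) hcard with hH | hH
      · exact hG.not_preconnected_or_not_preconnected_compl_of_induce hH
      · rw [compl_induce] at hH
        have := hG.compl.not_preconnected_or_not_preconnected_compl_of_induce hH
        rwa [compl_compl, Or.comm] at this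
    · have hW : ∀ w ≠ v, w = x := fun w hw =>
        congrArg Subtype.val ((not_nontrivial_iff_subsingleton.1 hW).elim ⟨w, hw⟩ ⟨x, hx⟩)
      by_cases hvx : G.Adj v x
      · exact .inr (not_preconnected_compl_of_forall_adj hx fun w hw => hW w hw ▸ hvx)
      · refine .inl (compl_compl G ▸ not_preconnected_compl_of_forall_adj hx fun w hw => ?_)
        rw [hW w hw, compl_adj]
        exact ⟨hx.symm, hvx⟩

lemma exists_finset_of_not_preconnected [Fintype V] [DecidableEq V] (h : ¬ G.Preconnected) :
    ∃ A : Finset V, A.Nonempty ∧ Aᶜ.Nonempty ∧ ∀ a ∈ A, ∀ b ∉ A, ¬ G.Adj a b := by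
  classical
  obtain ⟨x, y, hxy⟩ : ∃ x y, ¬ G.Reachable x y := by simpa [Preconnected] using h
  refine ⟨Finset.univ.filter (G.Reachable x), ⟨x, by simp⟩, ⟨y, by simpa⟩,
    fun a ha b hb hab => ?_⟩
  simp only [Finset.mem_filter, Finset.mem_univ, true_and] at ha hb
  exact hb (ha.trans hab.reachable)

end SimpleGraph

section Comparability

variable {α : Type*} [PartialOrder α]

variable (α) in
abbrev comparabilityGraph : SimpleGraph α := SimpleGraph.fromRel (· ≤ ·)

lemma NFree.isP4Free_comparabilityGraph (hN : NFree α) : (comparabilityGraph α).IsP4Free := by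
  intro a b c d hab hbc hcd
  by_contra! h
  simp only [SimpleGraph.fromRel_adj, ne_eq, not_and, not_or] at *
  obtain ⟨hac, hbd, had⟩ := h
  -- comparabilities along the path alternate in direction: it is an `N` read forwards or backwards
  rcases hab.2 with hab' | hba'
  · refine hN a b c d ⟨?_, ?_, ?_, ?_, ?_, ?_, ?_, ?_, ?_⟩ <;>
      grind [lt_iff_le_and_ne, le_trans, le_antisymm]
  · refine hN d c b a ⟨?_, ?_, ?_, ?_, ?_, ?_, ?_, ?_, ?_⟩ <;>
      grind [lt_iff_le_and_ne, le_trans, le_antisymm]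

lemma exists_parallel_split [Fintype α] [DecidableEq α]
    (h : ¬ (comparabilityGraph α).Preconnected) :
    ∃ A : Finset α, A.Nonempty ∧ Aᶜ.Nonempty ∧ ∀ a ∈ A, ∀ b ∉ A, ¬ a ≤ b ∧ ¬ b ≤ a := by
  obtain ⟨A, hA, hAc, hAB⟩ := SimpleGraph.exists_finset_of_not_preconnected h
  refine ⟨A, hA, hAc, fun a ha b hb => ?_⟩
  have hab : a ≠ b := by rintro rfl; exact hb ha
  simpa [hab] using hAB a ha b hb

lemma lt_or_gt_of_reachable_compl {x a p : α} (ha : (comparabilityGraph α)ᶜ.Reachable x a)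
    (hp : ¬ (comparabilityGraph α)ᶜ.Reachable x p) : a < p ∨ p < a := by
  have hap : a ≠ p := by rintro rfl; exact hp ha
  have hadj : ¬ (comparabilityGraph α)ᶜ.Adj a p := fun h => hp (ha.trans h.reachable)
  simp only [SimpleGraph.compl_adj, SimpleGraph.fromRel_adj] at hadj
  grind [lt_iff_le_and_ne]

lemma lt_iff_lt_of_reachable_compl {x a p : α} (ha : (comparabilityGraph α)ᶜ.Reachable x a)
    (hp : ¬ (comparabilityGraph α)ᶜ.Reachable x p) : a < p ↔ x < p := by
  rw [SimpleGraph.reachable_iff_reflTransGen] at ha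
  induction ha with
  | refl => rfl
  | @tail y a hxy hya ih =>
    have hyp := lt_or_gt_of_reachable_compl ((SimpleGraph.reachable_iff_reflTransGen _ _).2 hxy) hp
    have hap := lt_or_gt_of_reachable_compl
      ((SimpleGraph.reachable_iff_reflTransGen _ _).2 (hxy.tail hya)) hp
    simp only [SimpleGraph.compl_adj, SimpleGraph.fromRel_adj] at hya
    rw [← ih]
    grind [lt_iff_le_and_ne]

lemma exists_serial_split [Fintype α] [DecidableEq α]
    (h : ¬ (comparabilityGraph α)ᶜ.Preconnected) :
    ∃ A : Finset α, A.Nonempty ∧ Aᶜ.Nonempty ∧ ∀ a ∈ A, ∀ b ∉ A, a < b := by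
  obtain ⟨x, y, hxy⟩ : ∃ x y, ¬ (comparabilityGraph α)ᶜ.Reachable x y := by
    simpa [SimpleGraph.Preconnected] using h
  classical
  set C := (comparabilityGraph α)ᶜ.Reachable x
  -- if some point outside `C` lies above `x`, cut just below those points; otherwise every point
  -- outside `C` lies below `C`
  by_cases hup : ∃ p, ¬ C p ∧ x < p
  · refine ⟨(Finset.univ.filter fun p => ¬ C p ∧ x < p)ᶜ, ⟨x, by simp⟩, ?_, fun a ha b hb => ?_⟩
    · obtain ⟨p, hp⟩ := hup
      exact ⟨p, by simpa using hp⟩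
    simp only [Finset.mem_compl, Finset.mem_filter, Finset.mem_univ, true_and, not_and] at ha
    simp only [Finset.mem_compl, Finset.mem_filter, Finset.mem_univ, true_and, not_not] at hb
    by_cases hCa : C a
    · exact (lt_iff_lt_of_reachable_compl hCa hb.1).2 hb.2
    · exact ((lt_or_gt_of_reachable_compl .rfl hCa).resolve_left (ha hCa)).trans hb.2
  · push Not at hup
    refine ⟨Finset.univ.filter (¬ C ·), ⟨y, by simpa⟩, ⟨x, by simp [C]⟩, fun a ha b hb => ?_⟩
    simp only [Finset.mem_filter, Finset.mem_univ, true_and, not_not] at ha hb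
    exact (lt_or_gt_of_reachable_compl hb ha).resolve_left
      fun h => hup a ha ((lt_iff_lt_of_reachable_compl hb ha).1 h)

end Comparability

namespace FPoset

abbrev induced (P : FPoset) (A : Finset P.carrier) : FPoset := ⟨A⟩

variable {P : FPoset}

lemma card_induced_lt [DecidableEq P.carrier] {A : Finset P.carrier} (hA : Aᶜ.Nonempty) :
    Fintype.card (P.induced A).carrier < Fintype.card P.carrier := by
  obtain ⟨b, hb⟩ := hA
  simpa using Finset.card_lt_univ_of_notMem (Finset.mem_compl.1 hb)

lemma nFree_induced (h : NFree P.carrier) (A : Finset P.carrier) : NFree (P.induced A).carrier :=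
  h.of_orderEmbedding (OrderEmbedding.subtype _)

lemma isPar_induced_compl [DecidableEq P.carrier] {A : Finset P.carrier}
    (h : ∀ a ∈ A, ∀ b ∉ A, ¬ a ≤ b ∧ ¬ b ≤ a) : IsPar (P.induced A) (P.induced Aᶜ) P := by
  refine ⟨Subtype.val, Subtype.val, Subtype.val_injective, Subtype.val_injective, ?_, ?_, ?_⟩
  · rintro ⟨x, hx⟩ ⟨y, hy⟩ rfl
    exact Finset.mem_compl.1 hy hx
  · intro r
    by_cases hr : r ∈ A
    exacts [.inl ⟨⟨r, hr⟩, rfl⟩, .inr ⟨⟨r, Finset.mem_compl.2 hr⟩, rfl⟩]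
  · intro u v
    by_cases hu : u ∈ A <;> by_cases hv : v ∈ A
    · simp [hu, hv]
    · simpa [hu, hv] using (h u hu v hv).1
    · simpa [hu, hv] using (h v hv u hu).2
    · simp [hu, hv]

lemma isSer_induced_compl [DecidableEq P.carrier] {A : Finset P.carrier}
    (h : ∀ a ∈ A, ∀ b ∉ A, a < b) : IsSer (P.induced A) (P.induced Aᶜ) P := by
  refine ⟨Subtype.val, Subtype.val, Subtype.val_injective, Subtype.val_injective, ?_, ?_, ?_⟩
  · rintro ⟨x, hx⟩ ⟨y, hy⟩ rfl
    exact Finset.mem_compl.1 hy hx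
  · intro r
    by_cases hr : r ∈ A
    exacts [.inl ⟨⟨r, hr⟩, rfl⟩, .inr ⟨⟨r, Finset.mem_compl.2 hr⟩, rfl⟩]
  · intro u v
    by_cases hu : u ∈ A <;> by_cases hv : v ∈ A
    · simp [hu, hv]
    · simpa [hu, hv] using (h u hu v hv).le
    · simpa [hu, hv] using (h v hv u hu).not_ge
    · simp [hu, hv]

lemma sp_of_card_le_one (h : Fintype.card P.carrier ≤ 1) : SP P := by
  rcases Nat.le_one_iff_eq_zero_or_eq_one.1 h with h | h
  · exact .empty (Fintype.card_eq_zero_iff.1 h)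
  · exact .single (Fintype.card_eq_one_iff.1 h)

theorem sp_of_nFree (P : FPoset) (hP : NFree P.carrier) : SP P := by
  classical
  induction hn : Fintype.card P.carrier using Nat.strong_induction_on generalizing P with
  | _ n ih =>
  rcases le_or_gt n 1 with hn1 | hn1
  · exact sp_of_card_le_one (hn ▸ hn1)
  have : Nontrivial P.carrier := Fintype.one_lt_card_iff_nontrivial.1 (hn ▸ hn1)
  have ih' (A : Finset P.carrier) (hA : Aᶜ.Nonempty) : SP (P.induced A) :=
    ih _ (hn ▸ card_induced_lt hA) _ (nFree_induced hP A) rfl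
  rcases hP.isP4Free_comparabilityGraph.not_preconnected_or_not_preconnected_compl with h | h
  · obtain ⟨A, hA, hAc, hAB⟩ := exists_parallel_split h
    exact .par (ih' A hAc) (ih' Aᶜ (by simpa)) (isPar_induced_compl hAB)
  · obtain ⟨A, hA, hAc, hAB⟩ := exists_serial_split h
    exact .ser (ih' A hAc) (ih' Aᶜ (by simpa)) (isSer_induced_compl hAB)

end FPoset

/-- A finite poset is series-parallel iff it contains no induced N. -/
theorem seriesParallel_iff_N_free (P : FPoset) : SP P ↔ ¬ HasN P := by
  rw [not_hasN_iff]
  exact ⟨nFree_of_sp, P.sp_of_nFree⟩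
end

section
/- A finite poset P is an interval order if and only if it has an interval representation: functions b,e : P → Q into some linear order (Q, <_Q) such that b(x) <_Q e(x) for all x, and x <_P y ⟺ e(x) <_Q b(y) for all x,y ∈ P. -/
/-!
Fishburn's construction: send `x` to the interval `[|D x|, max {|D z| : ¬ x < z}]`, where `D x` is
the strict down-set of `x`. The interval-order axiom says exactly that strict down-sets are
nested, and more precisely that `x < y`, `¬ x < z` force `D z ⊂ D y`; this separates the right
end of `x` from the left end of `y` whenever `x < y`.
-/

open Finset

namespace IntervalOrder

def IsIntervalOrder (P : Type*) [LT P] : Prop :=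
  ∀ w x y z : P, w < y → x < z → w < z ∨ x < y

theorem IsIntervalOrder.of_representation {P Q : Type*} [LT P] [LinearOrder Q] {b e : P → Q}
    (hrep : ∀ x y, x < y ↔ e x < b y) : IsIntervalOrder P := by
  intro w x y z hwy hxz
  rw [hrep] at hwy hxz
  rw [hrep, hrep]
  exact (lt_or_ge (e w) (b z)).imp_right fun hzw => hxz.trans_le (hzw.trans hwy.le)

open scoped Classical

variable {P : Type*} [Preorder P] [Fintype P]

noncomputable def predCount (x : P) : ℕ := #{w | w < x}

noncomputable def maxPredCountNotAbove (x : P) : ℕ := ({z | ¬ x < z} : Finset P).sup predCount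

theorem predCount_lt_predCount (h : IsIntervalOrder P) {x y z : P} (hxy : x < y) (hxz : ¬ x < z) :
    predCount z < predCount y := by
  refine card_lt_card ⟨fun w hw => ?_, fun hsub => hxz ?_⟩
  · simp only [mem_filter, mem_univ, true_and] at hw ⊢
    exact (h w x z y hw hxy).resolve_right hxz
  · simpa using hsub (by simpa using hxy : x ∈ ({w | w < y} : Finset P))

theorem predCount_le_maxPredCountNotAbove {x y : P} (h : ¬ x < y) :
    predCount y ≤ maxPredCountNotAbove x :=
  le_sup (by simpa using h)

theorem maxPredCountNotAbove_lt_predCount (h : IsIntervalOrder P) {x y : P} (hxy : x < y) :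
    maxPredCountNotAbove x < predCount y := by
  have hpos : 0 < predCount y := card_pos.mpr ⟨x, by simpa using hxy⟩
  refine (Finset.sup_lt_iff hpos).mpr fun z hz => predCount_lt_predCount h hxy ?_
  simpa using hz

theorem lt_iff_maxPredCountNotAbove_lt_predCount (h : IsIntervalOrder P) {x y : P} :
    x < y ↔ maxPredCountNotAbove x < predCount y :=
  ⟨maxPredCountNotAbove_lt_predCount h, fun hlt => by
    by_contra hxy
    exact (predCount_le_maxPredCountNotAbove hxy).not_gt hlt⟩

-- Doubling the endpoints leaves room to make the right end `2 r + 1` strictly exceed the left end.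
theorem IsIntervalOrder.exists_nat_representation (h : IsIntervalOrder P) :
    ∃ b e : P → ℕ, (∀ x, b x < e x) ∧ ∀ x y, x < y ↔ e x < b y := by
  refine ⟨fun x => 2 * predCount x, fun x => 2 * maxPredCountNotAbove x + 1, fun x => ?_,
    fun x y => ?_⟩
  · have := predCount_le_maxPredCountNotAbove (lt_irrefl x)
    dsimp only
    omega
  · rw [lt_iff_maxPredCountNotAbove_lt_predCount h]
    dsimp only
    omega

end IntervalOrder

open IntervalOrder in
/-- Fishburn's theorem: a finite poset is an interval order iff it has an
interval representation, i.e. functions `b e : P → Q` into some linear order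
`Q` with `b x < e x` for all `x` and `x < y ↔ e x < b y` for all `x, y`. -/
theorem intervalOrder_iff_intervalRepresentation
    (P : Type) [Fintype P] [PartialOrder P] :
    (∀ w x y z : P, w < y → x < z → w < z ∨ x < y) ↔
      ∃ (Q : Type) (_ : LinearOrder Q) (b e : P → Q),
        (∀ x : P, b x < e x) ∧ (∀ x y : P, x < y ↔ e x < b y) := by
  constructor
  · intro h
    obtain ⟨b, e, hbe, hrep⟩ := IsIntervalOrder.exists_nat_representation h
    exact ⟨ℕ, inferInstance, b, e, hbe, hrep⟩
  · rintro ⟨Q, _, b, e, -, hrep⟩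
    exact IsIntervalOrder.of_representation hrep
end

section
/- The class of finite interval orders is closed under gluing composition of iposets: if P : n → m and Q : m → k are iposets whose underlying posets are interval orders, then the underlying poset of P * Q is an interval order. -/
/-- A poset with interfaces (iposet): a finite poset with injective monotone
source and target maps from discrete posets `Fin n`, `Fin m` whose images
consist of minimal, resp. maximal, elements. -/
structure Iposet where
  n : ℕ
  m : ℕ
  carrier : Type
  [str : PartialOrder carrier]
  [fin : Fintype carrier]
  s : Fin n → carrier
  t : Fin m → carrier
  s_inj : Function.Injective s
  t_inj : Function.Injective t
  s_min : ∀ (i : Fin n) (x : carrier), ¬ x < s i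
  t_max : ∀ (i : Fin m) (x : carrier), ¬ t i < x

attribute [instance] Iposet.str Iposet.fin

namespace Iposet

/-- The empty iposet `id_0`. -/
def IsEmptyIp (P : Iposet) : Prop := IsEmpty P.carrier ∧ P.n = 0 ∧ P.m = 0

/-- Singleton iposets: the underlying poset has exactly one point. -/
def IsSingletonIp (P : Iposet) : Prop := ∃ x : P.carrier, ∀ y : P.carrier, y = x

/-- Iposets with discrete underlying order. -/
def IsDiscrete (P : Iposet) : Prop := ∀ x y : P.carrier, x ≤ y → x = y

/-- Isomorphism of iposets: an order isomorphism of the underlying posets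
commuting with the interface maps. -/
def Iso (P Q : Iposet) : Prop :=
  ∃ (hn : P.n = Q.n) (hm : P.m = Q.m) (f : P.carrier ≃ Q.carrier),
    (∀ x y : P.carrier, x ≤ y ↔ f x ≤ f y) ∧
    (∀ i : Fin P.n, f (P.s i) = Q.s (Fin.cast hn i)) ∧
    (∀ i : Fin P.m, f (P.t i) = Q.t (Fin.cast hm i))

/-- `IsGluing P Q R` says that `R` is (a realization of) the gluing
composition `P * Q`: target interface points of `P` are identified with the
corresponding source interface points of `Q`, and every non-target point of
`P` is placed below every non-source point of `Q`. -/
def IsGluing (P Q R : Iposet) : Prop :=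
  ∃ (h : P.m = Q.n) (hn : R.n = P.n) (hm : R.m = Q.m)
    (ip : P.carrier → R.carrier) (iq : Q.carrier → R.carrier),
    Function.Injective ip ∧ Function.Injective iq ∧
    (∀ r : R.carrier, (∃ x, r = ip x) ∨ (∃ y, r = iq y)) ∧
    (∀ i : Fin P.m, ip (P.t i) = iq (Q.s (Fin.cast h i))) ∧
    (∀ (x : P.carrier) (y : Q.carrier), ip x = iq y →
      ∃ i : Fin P.m, x = P.t i ∧ y = Q.s (Fin.cast h i)) ∧
    (∀ u v : R.carrier, u ≤ v ↔
      ((∃ x y : P.carrier, u = ip x ∧ v = ip y ∧ x ≤ y) ∨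
       (∃ x y : Q.carrier, u = iq x ∧ v = iq y ∧ x ≤ y) ∨
       (∃ (x : P.carrier) (y : Q.carrier),
         u = ip x ∧ v = iq y ∧ x ∉ Set.range P.t ∧ y ∉ Set.range Q.s))) ∧
    (∀ i : Fin R.n, R.s i = ip (P.s (Fin.cast hn i))) ∧
    (∀ i : Fin R.m, R.t i = iq (Q.t (Fin.cast hm i)))

/-- `IsParallel P Q R` says that `R` is (a realization of) the parallel
composition `P ⊗ Q`: the disjoint union of the underlying posets, with
concatenated interfaces. -/
def IsParallel (P Q R : Iposet) : Prop :=
  ∃ (hn : P.n + Q.n = R.n) (hm : P.m + Q.m = R.m)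
    (ip : P.carrier → R.carrier) (iq : Q.carrier → R.carrier),
    Function.Injective ip ∧ Function.Injective iq ∧
    (∀ r : R.carrier, (∃ x, r = ip x) ∨ (∃ y, r = iq y)) ∧
    (∀ (x : P.carrier) (y : Q.carrier), ip x ≠ iq y) ∧
    (∀ u v : R.carrier, u ≤ v ↔
      ((∃ x y : P.carrier, u = ip x ∧ v = ip y ∧ x ≤ y) ∨
       (∃ x y : Q.carrier, u = iq x ∧ v = iq y ∧ x ≤ y))) ∧
    (∀ i : Fin P.n, R.s (Fin.cast hn (Fin.castAdd Q.n i)) = ip (P.s i)) ∧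
    (∀ j : Fin Q.n, R.s (Fin.cast hn (Fin.natAdd P.n j)) = iq (Q.s j)) ∧
    (∀ i : Fin P.m, R.t (Fin.cast hm (Fin.castAdd Q.m i)) = ip (P.t i)) ∧
    (∀ j : Fin Q.m, R.t (Fin.cast hm (Fin.natAdd P.m j)) = iq (Q.t j))

/-- The underlying poset is an interval order. -/
def IntvOrd (P : Iposet) : Prop :=
  ∀ w x y z : P.carrier, w < y → x < z → w < z ∨ x < y

end Iposet

/-!
A strict relation `u < v` in the gluing `P * Q` either lies inside `P`, lies inside `Q`, or runs
from a non-target point of `P` to a non-source point of `Q`, and every such pair of points is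
related. Since targets are maximal and sources minimal, a relation inside `P` starts at a
non-target point and one inside `Q` ends at a non-source point. So two relations not both inside
`P` nor both inside `Q` are resolved by the complete cross part, and the remaining cases are the
interval property of `P` or of `Q`.
-/

namespace Iposet

theorem notMem_range_t_of_lt {P : Iposet} {a b : P.carrier} (h : a < b) :
    a ∉ Set.range P.t := by
  rintro ⟨i, rfl⟩
  exact P.t_max i b h

theorem notMem_range_s_of_lt {Q : Iposet} {c d : Q.carrier} (h : c < d) :
    d ∉ Set.range Q.s := by
  rintro ⟨i, rfl⟩
  exact Q.s_min i c h

theorem IsGluing.exists_lt_iff {P Q R : Iposet} (hglue : IsGluing P Q R) :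
    ∃ (ip : P.carrier → R.carrier) (iq : Q.carrier → R.carrier), ∀ u v : R.carrier,
      u < v ↔ (∃ a b, a < b ∧ ip a = u ∧ ip b = v) ∨ (∃ c d, c < d ∧ iq c = u ∧ iq d = v) ∨
        (u ∈ ip '' (Set.range P.t)ᶜ ∧ v ∈ iq '' (Set.range Q.s)ᶜ) := by
  obtain ⟨_, _, _, ip, iq, hip, hiq, -, -, hglued, hle, -, -⟩ := hglue
  refine ⟨ip, iq, fun u v => ?_⟩
  rw [lt_iff_le_and_ne, hle]
  constructor
  · rintro ⟨⟨a, b, rfl, rfl, hab⟩ | ⟨c, d, rfl, rfl, hcd⟩ | ⟨a, d, rfl, rfl, ha, hd⟩, hne⟩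
    · exact Or.inl ⟨a, b, hab.lt_of_ne (ne_of_apply_ne ip hne), rfl, rfl⟩
    · exact Or.inr (Or.inl ⟨c, d, hcd.lt_of_ne (ne_of_apply_ne iq hne), rfl, rfl⟩)
    · exact Or.inr (Or.inr ⟨⟨a, ha, rfl⟩, ⟨d, hd, rfl⟩⟩)
  · rintro (⟨a, b, hab, rfl, rfl⟩ | ⟨c, d, hcd, rfl, rfl⟩ | ⟨⟨a, ha, rfl⟩, ⟨d, hd, rfl⟩⟩)
    · exact ⟨Or.inl ⟨a, b, rfl, rfl, hab.le⟩, hip.ne hab.ne⟩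
    · exact ⟨Or.inr (Or.inl ⟨c, d, rfl, rfl, hcd.le⟩), hiq.ne hcd.ne⟩
    · refine ⟨Or.inr (Or.inr ⟨a, d, rfl, rfl, ha, hd⟩), fun e => ?_⟩
      obtain ⟨i, rfl, -⟩ := hglued a d e
      exact ha ⟨i, rfl⟩

section GluedOrder

variable {P Q : Iposet} {γ : Type*} [LT γ] {ip : P.carrier → γ} {iq : Q.carrier → γ}
  (hlt : ∀ u v : γ,
    u < v ↔ (∃ a b, a < b ∧ ip a = u ∧ ip b = v) ∨ (∃ c d, c < d ∧ iq c = u ∧ iq d = v) ∨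
      (u ∈ ip '' (Set.range P.t)ᶜ ∧ v ∈ iq '' (Set.range Q.s)ᶜ))
include hlt

theorem lt_of_lt_left {a b : P.carrier} (h : a < b) : ip a < ip b :=
  (hlt _ _).2 (Or.inl ⟨a, b, h, rfl, rfl⟩)

theorem lt_of_lt_right {c d : Q.carrier} (h : c < d) : iq c < iq d :=
  (hlt _ _).2 (Or.inr (Or.inl ⟨c, d, h, rfl, rfl⟩))

theorem lt_of_mem_cross {u v : γ} (hu : u ∈ ip '' (Set.range P.t)ᶜ)
    (hv : v ∈ iq '' (Set.range Q.s)ᶜ) : u < v :=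
  (hlt _ _).2 (Or.inr (Or.inr ⟨hu, hv⟩))

theorem lt_cases_left {u v : γ} (h : u < v) :
    (∃ a b, a < b ∧ ip a = u ∧ ip b = v) ∨ v ∈ iq '' (Set.range Q.s)ᶜ := by
  rcases (hlt u v).1 h with hP | ⟨c, d, hcd, -, rfl⟩ | ⟨-, hv⟩
  exacts [Or.inl hP, Or.inr ⟨d, notMem_range_s_of_lt hcd, rfl⟩, Or.inr hv]

theorem lt_cases_right {u v : γ} (h : u < v) :
    (∃ c d, c < d ∧ iq c = u ∧ iq d = v) ∨ u ∈ ip '' (Set.range P.t)ᶜ := by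
  rcases (hlt u v).1 h with ⟨a, b, hab, rfl, -⟩ | hQ | ⟨hu, -⟩
  exacts [Or.inr ⟨a, notMem_range_t_of_lt hab, rfl⟩, Or.inl hQ, Or.inr hu]

end GluedOrder

end Iposet

/-- The class of finite interval orders is closed under gluing composition of
iposets: if the underlying posets of `P` and `Q` are interval orders, so is
that of `P * Q`. -/
theorem gluing_preserves_intervalOrder (P Q R : Iposet)
    (hglue : Iposet.IsGluing P Q R)
    (hP : Iposet.IntvOrd P) (hQ : Iposet.IntvOrd Q) :
    Iposet.IntvOrd R := by
  open Iposet in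
  obtain ⟨ip, iq, hlt⟩ := hglue.exists_lt_iff
  intro w x y z hwy hxz
  rcases (hlt w y).1 hwy with ⟨a, b, hab, rfl, rfl⟩ | ⟨a, b, hab, rfl, rfl⟩ | ⟨hw, hy⟩
  · rcases lt_cases_left hlt hxz with ⟨c, d, hcd, rfl, rfl⟩ | hz
    · exact (hP a c b d hab hcd).imp (lt_of_lt_left hlt) (lt_of_lt_left hlt)
    · exact Or.inl (lt_of_mem_cross hlt ⟨a, notMem_range_t_of_lt hab, rfl⟩ hz)
  · rcases lt_cases_right hlt hxz with ⟨c, d, hcd, rfl, rfl⟩ | hx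
    · exact (hQ a c b d hab hcd).imp (lt_of_lt_right hlt) (lt_of_lt_right hlt)
    · exact Or.inr (lt_of_mem_cross hlt hx ⟨b, notMem_range_s_of_lt hab, rfl⟩)
  · rcases lt_cases_left hlt hxz with ⟨c, d, hcd, rfl, -⟩ | hz
    · exact Or.inr (lt_of_mem_cross hlt ⟨c, notMem_range_t_of_lt hcd, rfl⟩ hy)
    · exact Or.inl (lt_of_mem_cross hlt hw hz)
end

section
/- Gluing composition of iposets is associative: for iposets P : n → m, Q : m → k, R : k → l, we have (P * Q) * R ≅ P * (Q * R), and the identity iposets id_n = (id, [n], id) : n → n are left and right units for gluing. Hence iposets (up to isomorphism) form a category with objects the natural numbers. -/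
/-- `E` is (isomorphic to) an identity iposet `id_n = (id, [n], id) : n → n`:
discrete, with bijective source interface equal to the target interface. -/
def IsIdentityIp (E : Iposet) : Prop :=
  Iposet.IsDiscrete E ∧ Function.Surjective E.s ∧
    ∃ h : E.n = E.m, ∀ i : Fin E.n, E.t (Fin.cast h i) = E.s i

/-!
Both `(P * Q) * R` and `P * (Q * R)` are quotients of `P ⊔ Q ⊔ R` by the identifications
`t_P i ~ s_Q i` and `t_Q j ~ s_R j`, and in both the order is the image of
`≤_P ∪ ≤_Q ∪ ≤_R ∪ (P∖t)×(Q∖s) ∪ (Q∖t)×(R∖s) ∪ (P∖t)×(R∖s)`. Two surjections from the same set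
with the same kernel and the same image order differ by an order isomorphism, which respects the
interfaces since these come from `s_P` and `t_R` in both.

Every point of an identity iposet is an interface point, so the inclusion of the other factor into
a gluing with an identity is onto; it reflects the order because glued points are extremal.
-/

open Function Set

theorem Function.Surjective.exists_bijective_comp_eq {X B D : Type*} {φ : X → B} {ψ : X → D}
    (hφ : Surjective φ) (hψ : Surjective ψ) (h : ∀ x y, φ x = φ y ↔ ψ x = ψ y) :
    ∃ f : B → D, Bijective f ∧ ∀ x, f (φ x) = ψ x := by
  have hf : ∀ x, ψ (surjInv hφ (φ x)) = ψ x := fun x => (h _ _).1 (surjInv_eq hφ _)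
  refine ⟨ψ ∘ surjInv hφ, ⟨fun u v huv => ?_, fun d => ?_⟩, hf⟩
  · rw [← surjInv_eq hφ u, ← surjInv_eq hφ v]
    exact (h _ _).2 huv
  · obtain ⟨x, rfl⟩ := hψ d
    exact ⟨φ x, hf x⟩

namespace Iposet

variable {P Q R A B C D : Iposet}

theorem Iso.of_bijective (f : P.carrier → Q.carrier) (hf : Bijective f)
    (hle : ∀ x y, f x ≤ f y ↔ x ≤ y) (hn : P.n = Q.n) (hm : P.m = Q.m)
    (hs : ∀ i, f (P.s i) = Q.s (Fin.cast hn i)) (ht : ∀ i, f (P.t i) = Q.t (Fin.cast hm i)) :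
    Iso P Q :=
  ⟨hn, hm, Equiv.ofBijective f hf, fun x y => (hle x y).symm, hs, ht⟩

theorem Iso.symm (h : Iso P Q) : Iso Q P := by
  obtain ⟨hn, hm, f, hle, hs, ht⟩ := h
  refine ⟨hn.symm, hm.symm, f.symm, fun x y => by simp [hle], fun i => ?_, fun i => ?_⟩
  · rw [f.symm_apply_eq, hs]
    simp
  · rw [f.symm_apply_eq, ht]
    simp

theorem eq_of_le_s {x : P.carrier} {i : Fin P.n} (h : x ≤ P.s i) : x = P.s i :=
  h.eq_or_lt.resolve_right (P.s_min i x)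

theorem eq_of_t_le {x : P.carrier} {i : Fin P.m} (h : P.t i ≤ x) : P.t i = x :=
  h.eq_or_lt.resolve_right (P.t_max i x)

def Glued (h : P.m = Q.n) (x : P.carrier) (y : Q.carrier) : Prop :=
  ∃ i, x = P.t i ∧ y = Q.s (Fin.cast h i)

structure Gluing (P Q R : Iposet) where
  m_eq_n : P.m = Q.n
  n_eq : R.n = P.n
  m_eq : R.m = Q.m
  inl : P.carrier → R.carrier
  inr : Q.carrier → R.carrier
  inl_injective : Injective inl
  inr_injective : Injective inr
  inl_or_inr : ∀ r, (∃ x, r = inl x) ∨ ∃ y, r = inr y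
  inl_eq_inr_iff : ∀ x y, inl x = inr y ↔ Glued m_eq_n x y
  le_iff : ∀ u v, u ≤ v ↔
    ((∃ x y : P.carrier, u = inl x ∧ v = inl y ∧ x ≤ y) ∨
     (∃ x y : Q.carrier, u = inr x ∧ v = inr y ∧ x ≤ y) ∨
     (∃ x y, u = inl x ∧ v = inr y ∧ x ∉ range P.t ∧ y ∉ range Q.s))
  s_eq : ∀ i, R.s i = inl (P.s (Fin.cast n_eq i))
  t_eq : ∀ i, R.t i = inr (Q.t (Fin.cast m_eq i))

theorem IsGluing.nonempty_gluing (hG : IsGluing P Q R) : Nonempty (Gluing P Q R) := by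
  obtain ⟨h, hn, hm, ip, iq, hip, hiq, hcov, hglue, hov, hle, hs, ht⟩ := hG
  refine ⟨⟨h, hn, hm, ip, iq, hip, hiq, hcov, fun x y => ⟨hov x y, ?_⟩, hle, hs, ht⟩⟩
  rintro ⟨i, rfl, rfl⟩
  exact hglue i

namespace Gluing

section

variable (g : Gluing P Q R)

attribute [simp] inl_eq_inr_iff

@[simp] theorem inl_inj {x y : P.carrier} : g.inl x = g.inl y ↔ x = y := g.inl_injective.eq_iff

@[simp] theorem inr_inj {x y : Q.carrier} : g.inr x = g.inr y ↔ x = y := g.inr_injective.eq_iff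

@[simp] theorem inr_eq_inl_iff {x y} : g.inr y = g.inl x ↔ Glued g.m_eq_n x y := by
  rw [eq_comm, inl_eq_inr_iff]

theorem inl_t (i : Fin P.m) : g.inl (P.t i) = g.inr (Q.s (Fin.cast g.m_eq_n i)) :=
  (g.inl_eq_inr_iff _ _).2 ⟨i, rfl, rfl⟩

theorem inr_s (j : Fin Q.n) : g.inr (Q.s j) = g.inl (P.t (Fin.cast g.m_eq_n.symm j)) := by
  simp [g.inl_t]

theorem inl_le_inl {x y : P.carrier} (h : x ≤ y) : g.inl x ≤ g.inl y :=
  (g.le_iff _ _).2 (.inl ⟨x, y, rfl, rfl, h⟩)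

theorem inr_le_inr {x y : Q.carrier} (h : x ≤ y) : g.inr x ≤ g.inr y :=
  (g.le_iff _ _).2 (.inr (.inl ⟨x, y, rfl, rfl, h⟩))

theorem inl_le_inr {x y} (hx : x ∉ range P.t) (hy : y ∉ range Q.s) : g.inl x ≤ g.inr y :=
  (g.le_iff _ _).2 (.inr (.inr ⟨x, y, rfl, rfl, hx, hy⟩))

theorem inr_mem_range_t {y : Q.carrier} : g.inr y ∈ range R.t ↔ y ∈ range Q.t := by
  simp only [mem_range, g.t_eq, inr_inj]
  exact ⟨fun ⟨k, hk⟩ => ⟨_, hk⟩,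
    fun ⟨j, hj⟩ => ⟨Fin.cast g.m_eq.symm j, by simpa⟩⟩

theorem inl_mem_range_s {x : P.carrier} : g.inl x ∈ range R.s ↔ x ∈ range P.s := by
  simp only [mem_range, g.s_eq, inl_inj]
  exact ⟨fun ⟨k, hk⟩ => ⟨_, hk⟩,
    fun ⟨j, hj⟩ => ⟨Fin.cast g.n_eq.symm j, by simpa⟩⟩

theorem mem_range_t_of_inl_mem_range_t {x : P.carrier} (h : g.inl x ∈ range R.t) :
    x ∈ range P.t := by
  obtain ⟨k, hk⟩ := h
  obtain ⟨i, rfl, -⟩ := (g.inl_eq_inr_iff _ _).1 ((g.t_eq k).symm.trans hk).symm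
  exact ⟨i, rfl⟩

theorem mem_range_s_of_inr_mem_range_s {y : Q.carrier} (h : g.inr y ∈ range R.s) :
    y ∈ range Q.s := by
  obtain ⟨k, hk⟩ := h
  obtain ⟨i, -, rfl⟩ := (g.inl_eq_inr_iff _ _).1 ((g.s_eq k).symm.trans hk)
  exact ⟨_, rfl⟩

/-- Points of `P` glued to comparable points of `Q` are targets, whose partners are sources and
hence minimal: comparability in `Q` forces equality. -/
theorem inl_le_inl_iff {x y : P.carrier} : g.inl x ≤ g.inl y ↔ x ≤ y := by
  refine ⟨fun h => ?_, g.inl_le_inl⟩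
  rcases (g.le_iff _ _).1 h with
    ⟨x', y', hx, hy, hle⟩ | ⟨x', y', hx, hy, hle⟩ | ⟨-, y', -, hy, -, hy'⟩
  · rwa [g.inl_inj.1 hx, g.inl_inj.1 hy]
  · obtain ⟨i, -, rfl⟩ := (g.inl_eq_inr_iff _ _).1 hy
    rw [eq_of_le_s hle, ← hy, g.inl_inj] at hx
    exact hx.le
  · obtain ⟨i, -, rfl⟩ := (g.inl_eq_inr_iff _ _).1 hy
    exact absurd ⟨_, rfl⟩ hy'

theorem inr_le_inr_iff {x y : Q.carrier} : g.inr x ≤ g.inr y ↔ x ≤ y := by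
  refine ⟨fun h => ?_, g.inr_le_inr⟩
  rcases (g.le_iff _ _).1 h with
    ⟨x', y', hx, hy, hle⟩ | ⟨x', y', hx, hy, hle⟩ | ⟨x', -, hx, -, hx', -⟩
  · obtain ⟨i, rfl, -⟩ := (g.inr_eq_inl_iff).1 hx
    rw [← eq_of_t_le hle, ← hx, g.inr_inj] at hy
    exact hy.ge
  · rwa [g.inr_inj.1 hx, g.inr_inj.1 hy]
  · obtain ⟨i, rfl, -⟩ := (g.inr_eq_inl_iff).1 hx
    exact absurd ⟨_, rfl⟩ hx'

end

theorem iso_of_isIdentityIp_left (g : Gluing P Q R) (hP : IsIdentityIp P) : Iso R Q := by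
  obtain ⟨-, hs, hnm, hts⟩ := hP
  have hsurj : Surjective g.inr := by
    intro r
    rcases g.inl_or_inr r with ⟨x, rfl⟩ | ⟨y, rfl⟩
    · obtain ⟨i, rfl⟩ := hs x
      rw [← hts, g.inl_t]
      exact ⟨_, rfl⟩
    · exact ⟨y, rfl⟩
  refine (Iso.of_bijective g.inr ⟨g.inr_injective, hsurj⟩ (fun _ _ => g.inr_le_inr_iff)
    (g.m_eq_n.symm.trans (hnm.symm.trans g.n_eq.symm)) g.m_eq.symm (fun i => ?_) (fun i => ?_)).symm
  · rw [g.s_eq, ← hts, g.inl_t]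
    simp
  · rw [g.t_eq]
    simp

theorem iso_of_isIdentityIp_right (g : Gluing P Q R) (hQ : IsIdentityIp Q) : Iso R P := by
  obtain ⟨-, hs, hnm, hts⟩ := hQ
  have hsurj : Surjective g.inl := by
    intro r
    rcases g.inl_or_inr r with ⟨x, rfl⟩ | ⟨y, rfl⟩
    · exact ⟨x, rfl⟩
    · obtain ⟨i, rfl⟩ := hs y
      exact ⟨_, (g.inr_s i).symm⟩
  refine (Iso.of_bijective g.inl ⟨g.inl_injective, hsurj⟩ (fun _ _ => g.inl_le_inl_iff)
    g.n_eq.symm (g.m_eq_n.trans (hnm.trans g.m_eq.symm)) (fun i => ?_) (fun i => ?_)).symm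
  · rw [g.s_eq]
    simp
  · rw [g.t_eq, g.inl_t, ← hts]
    simp

section

variable (g : Gluing P Q A) (h : A.m = R.n)

theorem inr_glued_iff {q : Q.carrier} {r : R.carrier} :
    Glued h (g.inr q) r ↔ Glued (g.m_eq.symm.trans h) q r := by
  simp only [Glued, g.t_eq, inr_inj]
  constructor
  · rintro ⟨k, rfl, rfl⟩
    exact ⟨_, rfl, by simp⟩
  · rintro ⟨j, rfl, rfl⟩
    exact ⟨Fin.cast g.m_eq.symm j, by simp, by simp⟩

theorem inl_glued_iff {p : P.carrier} {r : R.carrier} :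
    Glued h (g.inl p) r ↔ ∃ q, Glued g.m_eq_n p q ∧ Glued (g.m_eq.symm.trans h) q r := by
  constructor
  · intro hpr
    have ⟨k, hk, _⟩ := hpr
    rw [g.t_eq] at hk
    refine ⟨_, (g.inl_eq_inr_iff _ _).1 hk, ?_⟩
    rwa [← inr_glued_iff, ← hk]
  · rintro ⟨q, hpq, hqr⟩
    rwa [(g.inl_eq_inr_iff _ _).2 hpq, inr_glued_iff]

end

section

variable (g : Gluing Q R C) (h : P.m = C.n)

theorem glued_inl_iff {p : P.carrier} {q : Q.carrier} :
    Glued h p (g.inl q) ↔ Glued (h.trans g.n_eq) p q := by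
  simp [Glued, g.s_eq]

theorem glued_inr_iff {p : P.carrier} {r : R.carrier} :
    Glued h p (g.inr r) ↔ ∃ q, Glued (h.trans g.n_eq) p q ∧ Glued g.m_eq_n q r := by
  constructor
  · intro hpr
    have ⟨i, _, hi⟩ := hpr
    rw [g.s_eq] at hi
    refine ⟨_, ?_, (g.inr_eq_inl_iff).1 hi⟩
    rwa [← glued_inl_iff, ← hi]
  · rintro ⟨q, hpq, hqr⟩
    rwa [← (g.inl_eq_inr_iff _ _).2 hqr, glued_inl_iff]

end

end Gluing

def TripleGluingEq (hPQ : P.m = Q.n) (hQR : Q.m = R.n) :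
    P.carrier ⊕ Q.carrier ⊕ R.carrier → P.carrier ⊕ Q.carrier ⊕ R.carrier → Prop
  | .inl p, .inl p' => p = p'
  | .inr (.inl q), .inr (.inl q') => q = q'
  | .inr (.inr r), .inr (.inr r') => r = r'
  | .inl p, .inr (.inl q) | .inr (.inl q), .inl p => Glued hPQ p q
  | .inr (.inl q), .inr (.inr r) | .inr (.inr r), .inr (.inl q) => Glued hQR q r
  | .inl p, .inr (.inr r) | .inr (.inr r), .inl p => ∃ q, Glued hPQ p q ∧ Glued hQR q r

def TripleGluingLE (P Q R : Iposet) :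
    P.carrier ⊕ Q.carrier ⊕ R.carrier → P.carrier ⊕ Q.carrier ⊕ R.carrier → Prop
  | .inl p, .inl p' => p ≤ p'
  | .inr (.inl q), .inr (.inl q') => q ≤ q'
  | .inr (.inr r), .inr (.inr r') => r ≤ r'
  | .inl p, .inr (.inl q) => p ∉ range P.t ∧ q ∉ range Q.s
  | .inr (.inl q), .inr (.inr r) => q ∉ range Q.t ∧ r ∉ range R.s
  | .inl p, .inr (.inr r) => p ∉ range P.t ∧ r ∉ range R.s
  | _, _ => False

structure IsTripleGluing (P Q R B : Iposet) (hPQ : P.m = Q.n) (hQR : Q.m = R.n)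
    (φ : P.carrier ⊕ Q.carrier ⊕ R.carrier → B.carrier) : Prop where
  surjective : Surjective φ
  eq_iff : ∀ x y, φ x = φ y ↔ TripleGluingEq hPQ hQR x y
  le_iff : ∀ u v, u ≤ v ↔ ∃ x y, u = φ x ∧ v = φ y ∧ TripleGluingLE P Q R x y
  n_eq : B.n = P.n
  m_eq : B.m = R.m
  s_eq : ∀ i, B.s i = φ (.inl (P.s (Fin.cast n_eq i)))
  t_eq : ∀ i, B.t i = φ (.inr (.inr (R.t (Fin.cast m_eq i))))

theorem IsTripleGluing.iso {hPQ : P.m = Q.n} {hQR : Q.m = R.n}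
    {φ : P.carrier ⊕ Q.carrier ⊕ R.carrier → B.carrier}
    {ψ : P.carrier ⊕ Q.carrier ⊕ R.carrier → D.carrier}
    (hB : IsTripleGluing P Q R B hPQ hQR φ) (hD : IsTripleGluing P Q R D hPQ hQR ψ) :
    Iso B D := by
  have hker : ∀ x y, φ x = φ y ↔ ψ x = ψ y := fun x y =>
    (hB.eq_iff x y).trans (hD.eq_iff x y).symm
  obtain ⟨f, hf, hfφ⟩ := hB.surjective.exists_bijective_comp_eq hD.surjective hker
  refine Iso.of_bijective f hf (fun u v => ?_) (hB.n_eq.trans hD.n_eq.symm)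
    (hB.m_eq.trans hD.m_eq.symm) (fun i => ?_) (fun i => ?_)
  · obtain ⟨x, rfl⟩ := hB.surjective u
    obtain ⟨y, rfl⟩ := hB.surjective v
    simp only [hfφ, hB.le_iff, hD.le_iff, hker]
  · rw [hB.s_eq, hfφ, hD.s_eq]
    simp
  · rw [hB.t_eq, hfφ, hD.t_eq]
    simp

namespace Gluing

section LeftAssoc

variable (g₁ : Gluing P Q A) (g₂ : Gluing A R B)

def leftAssoc : P.carrier ⊕ Q.carrier ⊕ R.carrier → B.carrier :=
  Sum.elim (g₂.inl ∘ g₁.inl) (Sum.elim (g₂.inl ∘ g₁.inr) g₂.inr)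

theorem le_iff_leftAssoc (u v : B.carrier) :
    u ≤ v ↔
      ∃ x y, u = leftAssoc g₁ g₂ x ∧ v = leftAssoc g₁ g₂ y ∧ TripleGluingLE P Q R x y := by
  constructor
  · intro huv
    rcases (g₂.le_iff u v).1 huv with
      ⟨a, a', rfl, rfl, ha⟩ | ⟨r, r', rfl, rfl, hr⟩ | ⟨a, r, rfl, rfl, ha, hr⟩
    · rcases (g₁.le_iff a a').1 ha with
        ⟨p, p', rfl, rfl, h⟩ | ⟨q, q', rfl, rfl, h⟩ | ⟨p, q, rfl, rfl, hp, hq⟩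
      · exact ⟨.inl p, .inl p', rfl, rfl, h⟩
      · exact ⟨.inr (.inl q), .inr (.inl q'), rfl, rfl, h⟩
      · exact ⟨.inl p, .inr (.inl q), rfl, rfl, hp, hq⟩
    · exact ⟨.inr (.inr r), .inr (.inr r'), rfl, rfl, hr⟩
    · rcases g₁.inl_or_inr a with ⟨p, rfl⟩ | ⟨q, rfl⟩
      -- a target `P.t i` that is not a target of `P * Q` is represented by its partner `Q.s i`
      · by_cases hp : p ∈ range P.t
        · obtain ⟨i, rfl⟩ := hp
          rw [g₁.inl_t] at ha ⊢
          exact ⟨.inr (.inl _), .inr (.inr r), rfl, rfl, mt g₁.inr_mem_range_t.2 ha, hr⟩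
        · exact ⟨.inl p, .inr (.inr r), rfl, rfl, hp, hr⟩
      · exact ⟨.inr (.inl q), .inr (.inr r), rfl, rfl, mt g₁.inr_mem_range_t.2 ha, hr⟩
  · rintro ⟨x, y, rfl, rfl, hxy⟩
    match x, y, hxy with
    | .inl _, .inl _, h => exact g₂.inl_le_inl (g₁.inl_le_inl h)
    | .inr (.inl _), .inr (.inl _), h => exact g₂.inl_le_inl (g₁.inr_le_inr h)
    | .inr (.inr _), .inr (.inr _), h => exact g₂.inr_le_inr h
    | .inl _, .inr (.inl _), ⟨hp, hq⟩ => exact g₂.inl_le_inl (g₁.inl_le_inr hp hq)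
    | .inr (.inl _), .inr (.inr _), ⟨hq, hr⟩ =>
      exact g₂.inl_le_inr (mt g₁.inr_mem_range_t.1 hq) hr
    | .inl _, .inr (.inr _), ⟨hp, hr⟩ =>
      exact g₂.inl_le_inr (mt g₁.mem_range_t_of_inl_mem_range_t hp) hr

theorem isTripleGluing_leftAssoc :
    IsTripleGluing P Q R B g₁.m_eq_n (g₁.m_eq.symm.trans g₂.m_eq_n)
      (leftAssoc g₁ g₂) where
  surjective b := by
    rcases g₂.inl_or_inr b with ⟨a, rfl⟩ | ⟨r, rfl⟩
    · rcases g₁.inl_or_inr a with ⟨p, rfl⟩ | ⟨q, rfl⟩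
      · exact ⟨.inl p, rfl⟩
      · exact ⟨.inr (.inl q), rfl⟩
    · exact ⟨.inr (.inr r), rfl⟩
  eq_iff := by
    rintro (p | q | r) (p' | q' | r') <;>
      simp [leftAssoc, TripleGluingEq, inl_glued_iff, inr_glued_iff]
  le_iff := le_iff_leftAssoc g₁ g₂
  n_eq := g₂.n_eq.trans g₁.n_eq
  m_eq := g₂.m_eq
  s_eq := by simp [leftAssoc, g₂.s_eq, g₁.s_eq]
  t_eq := by simp [leftAssoc, g₂.t_eq]

end LeftAssoc

section RightAssoc

variable (g₃ : Gluing Q R C) (g₄ : Gluing P C D)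

def rightAssoc : P.carrier ⊕ Q.carrier ⊕ R.carrier → D.carrier :=
  Sum.elim g₄.inl (Sum.elim (g₄.inr ∘ g₃.inl) (g₄.inr ∘ g₃.inr))

theorem le_iff_rightAssoc (u v : D.carrier) :
    u ≤ v ↔
      ∃ x y, u = rightAssoc g₃ g₄ x ∧ v = rightAssoc g₃ g₄ y ∧ TripleGluingLE P Q R x y := by
  constructor
  · intro huv
    rcases (g₄.le_iff u v).1 huv with
      ⟨p, p', rfl, rfl, h⟩ | ⟨c, c', rfl, rfl, hc⟩ | ⟨p, c, rfl, rfl, hp, hc⟩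
    · exact ⟨.inl p, .inl p', rfl, rfl, h⟩
    · rcases (g₃.le_iff c c').1 hc with
        ⟨q, q', rfl, rfl, h⟩ | ⟨r, r', rfl, rfl, h⟩ | ⟨q, r, rfl, rfl, hq, hr⟩
      · exact ⟨.inr (.inl q), .inr (.inl q'), rfl, rfl, h⟩
      · exact ⟨.inr (.inr r), .inr (.inr r'), rfl, rfl, h⟩
      · exact ⟨.inr (.inl q), .inr (.inr r), rfl, rfl, hq, hr⟩
    · rcases g₃.inl_or_inr c with ⟨q, rfl⟩ | ⟨r, rfl⟩
      · exact ⟨.inl p, .inr (.inl q), rfl, rfl, hp, mt g₃.inl_mem_range_s.2 hc⟩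
      · by_cases hr : r ∈ range R.s
        · obtain ⟨j, rfl⟩ := hr
          rw [g₃.inr_s] at hc ⊢
          exact ⟨.inl p, .inr (.inl _), rfl, rfl, hp, mt g₃.inl_mem_range_s.2 hc⟩
        · exact ⟨.inl p, .inr (.inr r), rfl, rfl, hp, hr⟩
  · rintro ⟨x, y, rfl, rfl, hxy⟩
    match x, y, hxy with
    | .inl _, .inl _, h => exact g₄.inl_le_inl h
    | .inr (.inl _), .inr (.inl _), h => exact g₄.inr_le_inr (g₃.inl_le_inl h)
    | .inr (.inr _), .inr (.inr _), h => exact g₄.inr_le_inr (g₃.inr_le_inr h)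
    | .inl _, .inr (.inl _), ⟨hp, hq⟩ => exact g₄.inl_le_inr hp (mt g₃.inl_mem_range_s.1 hq)
    | .inr (.inl _), .inr (.inr _), ⟨hq, hr⟩ => exact g₄.inr_le_inr (g₃.inl_le_inr hq hr)
    | .inl _, .inr (.inr _), ⟨hp, hr⟩ =>
      exact g₄.inl_le_inr hp (mt g₃.mem_range_s_of_inr_mem_range_s hr)

theorem isTripleGluing_rightAssoc :
    IsTripleGluing P Q R D (g₄.m_eq_n.trans g₃.n_eq) g₃.m_eq_n (rightAssoc g₃ g₄) where
  surjective d := by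
    rcases g₄.inl_or_inr d with ⟨p, rfl⟩ | ⟨c, rfl⟩
    · exact ⟨.inl p, rfl⟩
    · rcases g₃.inl_or_inr c with ⟨q, rfl⟩ | ⟨r, rfl⟩
      · exact ⟨.inr (.inl q), rfl⟩
      · exact ⟨.inr (.inr r), rfl⟩
  eq_iff := by
    rintro (p | q | r) (p' | q' | r') <;>
      simp [rightAssoc, TripleGluingEq, glued_inl_iff, glued_inr_iff]
  le_iff := le_iff_rightAssoc g₃ g₄
  n_eq := g₄.n_eq
  m_eq := g₄.m_eq.trans g₃.m_eq
  s_eq := by simp [rightAssoc, g₄.s_eq]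
  t_eq := by simp [rightAssoc, g₄.t_eq, g₃.t_eq]

end RightAssoc

end Gluing
end Iposet

/-- Gluing composition of iposets is associative, and the identity iposets
`id_n` are left and right units for it; hence iposets up to isomorphism form
a category with objects the natural numbers. -/
theorem gluing_assoc_and_units :
    (∀ P Q R A B C D : Iposet,
      Iposet.IsGluing P Q A → Iposet.IsGluing A R B →
      Iposet.IsGluing Q R C → Iposet.IsGluing P C D →
      Iposet.Iso B D) ∧
    (∀ E P R : Iposet, IsIdentityIp E → Iposet.IsGluing E P R → Iposet.Iso R P) ∧
    (∀ E P R : Iposet, IsIdentityIp E → Iposet.IsGluing P E R → Iposet.Iso R P) := by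
  refine ⟨fun P Q R A B C D hA hB hC hD => ?_, fun E P R hE hG => ?_, fun E P R hE hG => ?_⟩
  · obtain ⟨g₁⟩ := hA.nonempty_gluing
    obtain ⟨g₂⟩ := hB.nonempty_gluing
    obtain ⟨g₃⟩ := hC.nonempty_gluing
    obtain ⟨g₄⟩ := hD.nonempty_gluing
    exact (g₁.isTripleGluing_leftAssoc g₂).iso (g₃.isTripleGluing_rightAssoc g₄)
  · obtain ⟨g⟩ := hG.nonempty_gluing
    exact g.iso_of_isIdentityIp_left hE
  · obtain ⟨g⟩ := hG.nonempty_gluing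
    exact g.iso_of_isIdentityIp_right hE
end

section
/- Lax interchange: for iposets P, P', Q, Q' (with matching interfaces so that both sides are defined), (P ⊗ P') * (Q ⊗ Q') ⪯ (P * Q) ⊗ (P' * Q'), where X ⪯ Y means there is a bijective-on-points iposet morphism from Y to X; concretely, the two iposets have the same points and interfaces, and every order relation of (P*Q) ⊗ (P'*Q') is also a relation of (P ⊗ P') * (Q ⊗ Q'). -/
/-!
`Rt = (P * Q) ⊗ (P' * Q')` and `L = (P ⊗ P') * (Q ⊗ Q')` are both quotients of the disjoint union
`(P ⊕ Q) ⊕ (P' ⊕ Q')` with the same interfaces, and both identify exactly the `i`-th target of `P`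
with the `i`-th source of `Q` and the `i`-th target of `P'` with the `i`-th source of `Q'`. For
`L` this holds because the targets of `P ⊗ P'` and the sources of `Q ⊗ Q'` are concatenations and
`P.m = Q.n`, so the gluing never matches a point of `P` with one of `Q'`. Hence `Rt` and `L` have
the same points. The order of `Rt` is generated by the orders of the four pieces together with
`x ≤ y` for `x` a non-target point of `P` and `y` a non-source point of `Q` (and likewise for `P'`,
`Q'`), and each of these relations also holds in `L`.
-/

open Function Sum

theorem Function.Surjective.exists_equiv_comp_eq {α β γ : Type*} {f : α → β} {g : α → γ}
    (hf : Surjective f) (hg : Surjective g) (hfg : ∀ a b, f a = f b ↔ g a = g b) :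
    ∃ e : β ≃ γ, ∀ a, e (f a) = g a := by
  have hcomp : ∀ a, g (surjInv hf (f a)) = g a := fun a =>
    (hfg _ _).1 (surjInv_eq hf (f a))
  refine ⟨Equiv.ofBijective (g ∘ surjInv hf) ⟨fun x y hxy => ?_, fun c => ?_⟩, hcomp⟩
  · rw [← surjInv_eq hf x, ← surjInv_eq hf y]
    exact (hfg _ _).2 hxy
  · obtain ⟨a, rfl⟩ := hg c
    exact ⟨f a, hcomp a⟩

namespace Iposet

section

variable {α β α' β' : Type*}

def appendSum {m n : ℕ} (u : Fin m → α) (v : Fin n → β) : Fin (m + n) → α ⊕ β :=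
  Fin.append (inl ∘ u) (inr ∘ v)

@[simp]
theorem appendSum_castAdd {m n : ℕ} (u : Fin m → α) (v : Fin n → β) (i : Fin m) :
    appendSum u v (Fin.castAdd n i) = inl (u i) :=
  Fin.append_left _ _ i

@[simp]
theorem appendSum_natAdd {m n : ℕ} (u : Fin m → α) (v : Fin n → β) (j : Fin n) :
    appendSum u v (Fin.natAdd m j) = inr (v j) :=
  Fin.append_right _ _ j

theorem inl_mem_range_appendSum {m n : ℕ} (u : Fin m → α) (v : Fin n → β) (a : α) :
    inl a ∈ Set.range (appendSum u v) ↔ a ∈ Set.range u := by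
  constructor
  · rintro ⟨k, hk⟩
    induction k using Fin.addCases with
    | left i => exact ⟨i, by simpa using hk⟩
    | right j => simp at hk
  · rintro ⟨i, rfl⟩
    exact ⟨Fin.castAdd n i, by simp⟩

theorem inr_mem_range_appendSum {m n : ℕ} (u : Fin m → α) (v : Fin n → β) (b : β) :
    inr b ∈ Set.range (appendSum u v) ↔ b ∈ Set.range v := by
  constructor
  · rintro ⟨k, hk⟩
    induction k using Fin.addCases with
    | left i => simp at hk
    | right j => exact ⟨j, by simpa using hk⟩
  · rintro ⟨j, rfl⟩
    exact ⟨Fin.natAdd m j, by simp⟩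

theorem appendSum_comp_cast {γ δ : Type*} {m n m₀ n₀ : ℕ} (f : γ → α) (g : δ → β)
    (u : Fin m₀ → γ) (v : Fin n₀ → δ) (hm : m = m₀) (hn : n = n₀) (k : Fin (m + n)) :
    appendSum (f ∘ u ∘ Fin.cast hm) (g ∘ v ∘ Fin.cast hn) k =
      Sum.map f g (appendSum u v (Fin.cast (by omega) k)) := by
  subst hm hn
  induction k using Fin.addCases <;> simp

def Seam {m n : ℕ} (t : Fin m → α) (s : Fin n → β) (h : m = n) (a : α) (b : β) : Prop :=
  ∃ i, a = t i ∧ b = s (Fin.cast h i)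

theorem seam_comp_cast {γ δ : Type*} {m n m₀ n₀ : ℕ} {f : γ → α} {g : δ → β}
    (hf : Injective f) (hg : Injective g) (t : Fin m₀ → γ) (s : Fin n₀ → δ)
    (hm : m = m₀) (hn : n = n₀) (h : m = n) (c : γ) (d : δ) :
    Seam (f ∘ t ∘ Fin.cast hm) (g ∘ s ∘ Fin.cast hn) h (f c) (g d) ↔
      Seam t s (by omega) c d := by
  subst hm hn
  simp [Seam, hf.eq_iff, hg.eq_iff]

theorem seam_appendSum {m n m' n' : ℕ} (t : Fin m → α) (s : Fin n → β) (t' : Fin m' → α')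
    (s' : Fin n' → β') (h : m = n) (h' : m' = n') (a : α ⊕ α') (b : β ⊕ β') :
    Seam (appendSum t t') (appendSum s s') (by omega) a b ↔
      LiftRel (Seam t s h) (Seam t' s' h') a b := by
  subst h h'
  constructor
  · rintro ⟨k, rfl, rfl⟩
    induction k using Fin.addCases with
    | left i =>
      simpa using LiftRel.inl (s := Seam t' s' rfl) (show Seam t s rfl _ _ from ⟨i, rfl, rfl⟩)
    | right j =>
      simpa using LiftRel.inr (r := Seam t s rfl) (show Seam t' s' rfl _ _ from ⟨j, rfl, rfl⟩)
  · rintro (⟨⟨i, rfl, rfl⟩⟩ | ⟨⟨j, rfl, rfl⟩⟩)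
    · exact ⟨Fin.castAdd _ i, by simp, by simp⟩
    · exact ⟨Fin.natAdd _ j, by simp, by simp⟩

/- The identification (`GlueEq`) and the generating order (`GlueLE`) of a gluing, seen on the
disjoint union of its two parts; `S` and `T` are the relations across the seam. -/
def GlueEq (S : α → β → Prop) : α ⊕ β → α ⊕ β → Prop
  | inl a, inl a' => a = a'
  | inr b, inr b' => b = b'
  | inl a, inr b => S a b
  | inr b, inl a => S a b

def GlueLE [LE α] [LE β] (T : α → β → Prop) : α ⊕ β → α ⊕ β → Prop
  | inl a, inl a' => a ≤ a'
  | inr b, inr b' => b ≤ b'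
  | inl a, inr b => T a b
  | inr _, inl _ => False

theorem glueEq_map_iff {γ δ : Type*} {f : γ → α} {g : δ → β} (hf : Injective f)
    (hg : Injective g) (S : α → β → Prop) (c d : γ ⊕ δ) :
    GlueEq S (Sum.map f g c) (Sum.map f g d) ↔ GlueEq (fun x y => S (f x) (g y)) c d := by
  cases c <;> cases d <;> simp [GlueEq, hf.eq_iff, hg.eq_iff]

theorem GlueLE.map {γ δ : Type*} [Preorder α] [Preorder β] [Preorder γ] [Preorder δ]
    {f : γ → α} {g : δ → β} (hf : Monotone f) (hg : Monotone g) {T : α → β → Prop}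
    {c d : γ ⊕ δ} (h : GlueLE (fun x y => T (f x) (g y)) c d) :
    GlueLE T (Sum.map f g c) (Sum.map f g d) := by
  cases c <;> cases d <;> simp only [Sum.map_inl, Sum.map_inr, GlueLE] at h ⊢
  exacts [hf h, h, hg h]

theorem glueEq_sumSumSumComm (S : α → β → Prop) (S' : α' → β' → Prop)
    (a b : (α ⊕ β) ⊕ (α' ⊕ β')) :
    GlueEq (LiftRel S S') (Equiv.sumSumSumComm α β α' β' a)
        (Equiv.sumSumSumComm α β α' β' b) ↔ LiftRel (GlueEq S) (GlueEq S') a b := by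
  rcases a with (a | a) | (a | a) <;> rcases b with (b | b) | (b | b) <;>
    simp [GlueEq, Equiv.sumSumSumComm]

theorem GlueLE.sumSumSumComm [LE α] [LE β] [LE α'] [LE β'] {T : α → β → Prop}
    {T' : α' → β' → Prop} {U : α ⊕ α' → β ⊕ β' → Prop}
    (hT : ∀ a b, T a b → U (inl a) (inl b)) (hT' : ∀ a b, T' a b → U (inr a) (inr b))
    {a b : (α ⊕ β) ⊕ (α' ⊕ β')} (h : LiftRel (GlueLE T) (GlueLE T') a b) :
    GlueLE U (Equiv.sumSumSumComm α β α' β' a) (Equiv.sumSumSumComm α β α' β' b) := by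
  rcases h with @⟨a, b, h⟩ | @⟨a, b, h⟩ <;> rcases a with a | a <;> rcases b with b | b <;>
    simp only [GlueLE] at h <;> simp [Equiv.sumSumSumComm, GlueLE, h, hT, hT']

theorem sumSumSumComm_map_inl_inl (z : α ⊕ α') :
    Equiv.sumSumSumComm α β α' β' (Sum.map inl inl z) = inl z := by
  cases z <;> rfl

theorem sumSumSumComm_map_inr_inr (z : β ⊕ β') :
    Equiv.sumSumSumComm α β α' β' (Sum.map inr inr z) = inr z := by
  cases z <;> rfl

theorem mem_range_comp_cast {γ : Type*} {m n : ℕ} {f : γ → α} (hf : Injective f)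
    (u : Fin m → γ) (h : n = m) (c : γ) :
    f c ∈ Set.range (f ∘ u ∘ Fin.cast h) ↔ c ∈ Set.range u := by
  subst h
  simp [hf.eq_iff]

end

variable {X Y R : Iposet}

def Crossing (X Y : Iposet) (x : X.carrier) (y : Y.carrier) : Prop :=
  x ∉ Set.range X.t ∧ y ∉ Set.range Y.s

theorem IsParallel.exists_orderIso (h : IsParallel X Y R) :
    ∃ (hn : R.n = X.n + Y.n) (hm : R.m = X.m + Y.m) (e : X.carrier ⊕ Y.carrier ≃o R.carrier),
      R.s = e ∘ appendSum X.s Y.s ∘ Fin.cast hn ∧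
        R.t = e ∘ appendSum X.t Y.t ∘ Fin.cast hm := by
  obtain ⟨hn, hm, ip, iq, hip, hiq, hcov, hdisj, hle, hs₁, hs₂, ht₁, ht₂⟩ := h
  have hbij : Bijective (Sum.elim ip iq) := by
    refine ⟨hip.sumElim hiq hdisj, fun r => ?_⟩
    rcases hcov r with ⟨x, rfl⟩ | ⟨y, rfl⟩
    exacts [⟨inl x, rfl⟩, ⟨inr y, rfl⟩]
  let e : X.carrier ⊕ Y.carrier ≃o R.carrier :=
    { Equiv.ofBijective _ hbij with
      map_rel_iff' := fun {a b} => by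
        rcases a with a | a <;> rcases b with b | b <;>
          simp [hle, hip.eq_iff, hiq.eq_iff, hdisj, (hdisj _ _).symm] }
  refine ⟨hn.symm, hm.symm, e, funext fun i => ?_, funext fun i => ?_⟩
  · obtain ⟨k, rfl⟩ : ∃ k, i = Fin.cast hn k := ⟨Fin.cast hn.symm i, by simp⟩
    induction k using Fin.addCases <;> simp [e, hs₁, hs₂]
  · obtain ⟨k, rfl⟩ : ∃ k, i = Fin.cast hm k := ⟨Fin.cast hm.symm i, by simp⟩
    induction k using Fin.addCases <;> simp [e, ht₁, ht₂]

theorem IsGluing.exists_cover (h : IsGluing X Y R) :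
    ∃ (hXY : X.m = Y.n) (hn : R.n = X.n) (hm : R.m = Y.m)
      (π : X.carrier ⊕ Y.carrier → R.carrier),
      Surjective π ∧ (∀ a b, π a = π b ↔ GlueEq (Seam X.t Y.s hXY) a b) ∧
      (∀ u v, u ≤ v ↔ ∃ a b, π a = u ∧ π b = v ∧ GlueLE (Crossing X Y) a b) ∧
      R.s = π ∘ inl ∘ X.s ∘ Fin.cast hn ∧ R.t = π ∘ inr ∘ Y.t ∘ Fin.cast hm := by
  obtain ⟨hXY, hn, hm, ip, iq, hip, hiq, hcov, hglue, hseam, hle, hs, ht⟩ := h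
  have hcross : ∀ x y, ip x = iq y ↔ Seam X.t Y.s hXY x y := fun x y =>
    ⟨hseam x y, by rintro ⟨i, rfl, rfl⟩; exact hglue i⟩
  refine ⟨hXY, hn, hm, Sum.elim ip iq, fun r => ?_, fun a b => ?_, fun u v => ?_,
    funext hs, funext ht⟩
  · rcases hcov r with ⟨x, rfl⟩ | ⟨y, rfl⟩
    exacts [⟨inl x, rfl⟩, ⟨inr y, rfl⟩]
  · rcases a with a | a <;> rcases b with b | b <;>
      simp [GlueEq, hip.eq_iff, hiq.eq_iff, hcross, eq_comm (a := iq _)]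
  · rw [hle]
    constructor
    · rintro (⟨x, y, rfl, rfl, hxy⟩ | ⟨x, y, rfl, rfl, hxy⟩ | ⟨x, y, rfl, rfl, hxy⟩)
      exacts [⟨inl x, inl y, rfl, rfl, hxy⟩, ⟨inr x, inr y, rfl, rfl, hxy⟩,
        ⟨inl x, inr y, rfl, rfl, hxy⟩]
    · rintro ⟨x | x, y | y, rfl, rfl, hxy⟩
      exacts [.inl ⟨x, y, rfl, rfl, hxy⟩, .inr (.inr ⟨x, y, rfl, rfl, hxy⟩), hxy.elim,
        .inr (.inl ⟨x, y, rfl, rfl, hxy⟩)]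

/-- `π` presents the points and interfaces of `R` as those of `(P * Q) ⊗ (P' * Q')`. -/
def IsInterchangeCover (P Q P' Q' R : Iposet) (hPQ : P.m = Q.n) (hPQ' : P'.m = Q'.n)
    (π : (P.carrier ⊕ Q.carrier) ⊕ (P'.carrier ⊕ Q'.carrier) → R.carrier) : Prop :=
  Surjective π ∧
    (∀ a b, π a = π b ↔
      LiftRel (GlueEq (Seam P.t Q.s hPQ)) (GlueEq (Seam P'.t Q'.s hPQ')) a b) ∧
    (∃ hn : R.n = P.n + P'.n,
      R.s = π ∘ Sum.map inl inl ∘ appendSum P.s P'.s ∘ Fin.cast hn) ∧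
    (∃ hm : R.m = Q.m + Q'.m,
      R.t = π ∘ Sum.map inr inr ∘ appendSum Q.t Q'.t ∘ Fin.cast hm)

variable {P Q P' Q' : Iposet}

theorem IsInterchangeCover.exists_equiv {R₁ R₂ : Iposet} {hPQ : P.m = Q.n} {hPQ' : P'.m = Q'.n}
    {π₁ π₂} (h₁ : IsInterchangeCover P Q P' Q' R₁ hPQ hPQ' π₁)
    (h₂ : IsInterchangeCover P Q P' Q' R₂ hPQ hPQ' π₂) :
    ∃ (hn : R₁.n = R₂.n) (hm : R₁.m = R₂.m) (e : R₁.carrier ≃ R₂.carrier),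
      (∀ a, e (π₁ a) = π₂ a) ∧ (∀ i, e (R₁.s i) = R₂.s (Fin.cast hn i)) ∧
      (∀ i, e (R₁.t i) = R₂.t (Fin.cast hm i)) := by
  obtain ⟨surj₁, ker₁, ⟨hn₁, hs₁⟩, ⟨hm₁, ht₁⟩⟩ := h₁
  obtain ⟨surj₂, ker₂, ⟨hn₂, hs₂⟩, ⟨hm₂, ht₂⟩⟩ := h₂
  obtain ⟨e, he⟩ :=
    surj₁.exists_equiv_comp_eq surj₂ fun a b => (ker₁ a b).trans (ker₂ a b).symm
  refine ⟨by omega, by omega, e, he, fun i => ?_, fun i => ?_⟩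
  · simp [hs₁, hs₂, he]
  · simp [ht₁, ht₂, he]

theorem IsParallel.exists_interchangeCover {C C' Rt : Iposet} (hC : IsGluing P Q C)
    (hC' : IsGluing P' Q' C') (hR : IsParallel C C' Rt) :
    ∃ π, IsInterchangeCover P Q P' Q' Rt hC.fst hC'.fst π ∧ ∀ u v, u ≤ v →
      ∃ a b, π a = u ∧ π b = v ∧
        LiftRel (GlueLE (Crossing P Q)) (GlueLE (Crossing P' Q')) a b := by
  obtain ⟨_, hnC, hmC, πC, surjC, kerC, leC, sC, tC⟩ := hC.exists_cover
  obtain ⟨_, hnC', hmC', πC', surjC', kerC', leC', sC', tC'⟩ := hC'.exists_cover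
  obtain ⟨hnR, hmR, e, sR, tR⟩ := hR.exists_orderIso
  refine ⟨e ∘ Sum.map πC πC', ⟨e.surjective.comp (map_surjective.2 ⟨surjC, surjC'⟩),
    fun a b => ?_, ⟨by omega, funext fun i => ?_⟩, ⟨by omega, funext fun i => ?_⟩⟩, ?_⟩
  · rcases a with a | a <;> rcases b with b | b <;> simp [kerC, kerC']
  · simp only [sR, sC, sC', comp_apply, Sum.map_map]
    exact congrArg e (appendSum_comp_cast (πC ∘ inl) (πC' ∘ inl) P.s P'.s hnC hnC' _)
  · simp only [tR, tC, tC', comp_apply, Sum.map_map]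
    exact congrArg e (appendSum_comp_cast (πC ∘ inr) (πC' ∘ inr) Q.t Q'.t hmC hmC' _)
  · intro u v huv
    obtain ⟨c, rfl⟩ := e.surjective u
    obtain ⟨d, rfl⟩ := e.surjective v
    rcases e.le_iff_le.1 huv with @⟨c, d, hcd⟩ | @⟨c, d, hcd⟩
    · obtain ⟨a, b, rfl, rfl, hab⟩ := (leC c d).1 hcd
      exact ⟨inl a, inl b, rfl, rfl, .inl hab⟩
    · obtain ⟨a, b, rfl, rfl, hab⟩ := (leC' c d).1 hcd
      exact ⟨inr a, inr b, rfl, rfl, .inr hab⟩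

theorem IsGluing.exists_interchangeCover {A B L : Iposet} (hPQ : P.m = Q.n)
    (hPQ' : P'.m = Q'.n) (hA : IsParallel P P' A)
    (hB : IsParallel Q Q' B) (hL : IsGluing A B L) :
    ∃ π, IsInterchangeCover P Q P' Q' L hPQ hPQ' π ∧ ∀ a b,
      LiftRel (GlueLE (Crossing P Q)) (GlueLE (Crossing P' Q')) a b → π a ≤ π b := by
  obtain ⟨hnA, hmA, eA, sA, tA⟩ := hA.exists_orderIso
  obtain ⟨hnB, hmB, eB, sB, tB⟩ := hB.exists_orderIso
  obtain ⟨hAB, hnL, hmL, πL, surjL, kerL, leL, sL, tL⟩ := hL.exists_cover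
  let σ := Equiv.sumSumSumComm P.carrier Q.carrier P'.carrier Q'.carrier
  have hseam : (fun x y => Seam A.t B.s hAB (eA x) (eB y)) =
      LiftRel (Seam P.t Q.s hPQ) (Seam P'.t Q'.s hPQ') := by
    ext x y
    rw [tA, sB, seam_comp_cast eA.injective eB.injective, seam_appendSum _ _ _ _ hPQ hPQ']
  have hcross : ∀ x y, Crossing P Q x y → Crossing A B (eA (inl x)) (eB (inl y)) := by
    simp only [Crossing, tA, sB, mem_range_comp_cast eA.injective,
      mem_range_comp_cast eB.injective, inl_mem_range_appendSum, imp_self, implies_true]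
  have hcross' : ∀ x y, Crossing P' Q' x y → Crossing A B (eA (inr x)) (eB (inr y)) := by
    simp only [Crossing, tA, sB, mem_range_comp_cast eA.injective,
      mem_range_comp_cast eB.injective, inr_mem_range_appendSum, imp_self, implies_true]
  refine ⟨πL ∘ Sum.map eA eB ∘ σ,
    ⟨surjL.comp ((map_surjective.2 ⟨eA.surjective, eB.surjective⟩).comp σ.surjective),
      fun a b => ?_, ⟨by omega, funext fun i => ?_⟩, ⟨by omega, funext fun i => ?_⟩⟩,
    fun a b hab => (leL _ _).2 ⟨_, _, rfl, rfl, ?_⟩⟩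
  · simp only [comp_apply, kerL, glueEq_map_iff eA.injective eB.injective, hseam]
    exact glueEq_sumSumSumComm _ _ a b
  · simp only [σ, sL, sA, comp_apply, sumSumSumComm_map_inl_inl, Sum.map_inl, Fin.cast_cast]
  · simp only [σ, tL, tB, comp_apply, sumSumSumComm_map_inr_inr, Sum.map_inr, Fin.cast_cast]
  · exact (GlueLE.sumSumSumComm hcross hcross' hab).map eA.monotone eB.monotone

end Iposet

/-- Lax interchange: `(P ⊗ P') * (Q ⊗ Q') ⪯ (P * Q) ⊗ (P' * Q')`.
Here `L = (P ⊗ P') * (Q ⊗ Q')` and `Rt = (P * Q) ⊗ (P' * Q')` have the same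
points and interfaces, and there is a bijective iposet morphism `Rt → L`:
every order relation of `Rt` is also one of `L`. -/
theorem lax_interchange (P P' Q Q' A B L C C' Rt : Iposet)
    (hA : Iposet.IsParallel P P' A) (hB : Iposet.IsParallel Q Q' B)
    (hL : Iposet.IsGluing A B L)
    (hC : Iposet.IsGluing P Q C) (hC' : Iposet.IsGluing P' Q' C')
    (hR : Iposet.IsParallel C C' Rt) :
    ∃ (hn : Rt.n = L.n) (hm : Rt.m = L.m) (f : Rt.carrier ≃ L.carrier),
      (∀ x y : Rt.carrier, x ≤ y → f x ≤ f y) ∧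
      (∀ i : Fin Rt.n, f (Rt.s i) = L.s (Fin.cast hn i)) ∧
      (∀ i : Fin Rt.m, f (Rt.t i) = L.t (Fin.cast hm i)) := by
  obtain ⟨πR, hπR, hleR⟩ := hR.exists_interchangeCover hC hC'
  obtain ⟨πL, hπL, hleL⟩ := hL.exists_interchangeCover hC.fst hC'.fst hA hB
  obtain ⟨hn, hm, f, hf, hs, ht⟩ := hπR.exists_equiv hπL
  refine ⟨hn, hm, f, fun x y hxy => ?_, hs, ht⟩
  obtain ⟨a, b, rfl, rfl, hab⟩ := hleR x y hxy
  rw [hf, hf]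
  exact hleL a b hab
end

section
/- Equational interchange for singletons: for iposets P : 1 → m and Q : m → 1 (so that the gluings are defined) and k, ℓ ∈ {0,1}, (1_{k,1} ⊗ P) * (1_{1,ℓ} ⊗ Q) = 1_{k,ℓ} ⊗ (P * Q), where 1_{k,ℓ} denotes the singleton iposet on one point with source interface of size k and target interface of size ℓ. -/
/-- `1_{k,ℓ}`: the singleton iposet with source interface of size `k` and
target interface of size `ℓ` (`k, ℓ ∈ {0,1}`). -/
def IsIdpos (k l : ℕ) (E : Iposet) : Prop :=
  E.n = k ∧ E.m = l ∧ Iposet.IsSingletonIp E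

/-! Both sides consist of a single point, carrying the first `k` sources and the first `ℓ`
targets, beside `P` and `Q` glued along their common interface. On the left, that point is the
gluing of the target of `1_{k,1}` with the source of `1_{1,ℓ}`; as it is a target of
`1_{k,1} ⊗ P` and a source of `1_{1,ℓ} ⊗ Q`, the gluing creates no relation through it, and the
only new relations are those between non-targets of `P` and non-sources of `Q`, as in `P * Q`.
Two such presentations are isomorphic via the bijection matching the points and the copies of
`P` and `Q`. -/

theorem Fin.exists_val_eq_or_val_eq_add {X : Type*} {a b c : ℕ} (hc : a + b = c)
    {f : Fin c → X} {g : Fin a → X} {h : Fin b → X}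
    (hg : ∀ i, f (Fin.cast hc (Fin.castAdd b i)) = g i)
    (hh : ∀ j, f (Fin.cast hc (Fin.natAdd a j)) = h j) (ι : Fin c) :
    (∃ i : Fin a, ι.val = i.val ∧ f ι = g i) ∨ ∃ j : Fin b, ι.val = a + j.val ∧ f ι = h j := by
  subst hc
  induction ι using Fin.addCases with
  | left i => exact Or.inl ⟨i, rfl, by simpa using hg i⟩
  | right j => exact Or.inr ⟨j, rfl, by simpa using hh j⟩

namespace Iposet

structure ParallelWitness (P Q R : Iposet) where
  hn : P.n + Q.n = R.n
  hm : P.m + Q.m = R.m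
  ip : P.carrier → R.carrier
  iq : Q.carrier → R.carrier
  ip_inj : Function.Injective ip
  iq_inj : Function.Injective iq
  cover : ∀ r, (∃ x, r = ip x) ∨ ∃ y, r = iq y
  ip_ne_iq : ∀ x y, ip x ≠ iq y
  le_iff : ∀ u v, u ≤ v ↔
    (∃ x y, u = ip x ∧ v = ip y ∧ x ≤ y) ∨ (∃ x y, u = iq x ∧ v = iq y ∧ x ≤ y)
  s_left : ∀ i, R.s (Fin.cast hn (Fin.castAdd Q.n i)) = ip (P.s i)
  s_right : ∀ j, R.s (Fin.cast hn (Fin.natAdd P.n j)) = iq (Q.s j)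
  t_left : ∀ i, R.t (Fin.cast hm (Fin.castAdd Q.m i)) = ip (P.t i)
  t_right : ∀ j, R.t (Fin.cast hm (Fin.natAdd P.m j)) = iq (Q.t j)

theorem IsParallel.nonempty_witness {P Q R : Iposet} (h : IsParallel P Q R) :
    Nonempty (ParallelWitness P Q R) := by
  obtain ⟨hn, hm, ip, iq, h₁, h₂, h₃, h₄, h₅, h₆, h₇, h₈, h₉⟩ := h
  exact ⟨⟨hn, hm, ip, iq, h₁, h₂, h₃, h₄, h₅, h₆, h₇, h₈, h₉⟩⟩

structure GluingWitness (P Q R : Iposet) where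
  h : P.m = Q.n
  hn : R.n = P.n
  hm : R.m = Q.m
  ip : P.carrier → R.carrier
  iq : Q.carrier → R.carrier
  ip_inj : Function.Injective ip
  iq_inj : Function.Injective iq
  cover : ∀ r, (∃ x, r = ip x) ∨ ∃ y, r = iq y
  glue : ∀ i, ip (P.t i) = iq (Q.s (Fin.cast h i))
  glue_back : ∀ x y, ip x = iq y → ∃ i, x = P.t i ∧ y = Q.s (Fin.cast h i)
  le_iff : ∀ u v, u ≤ v ↔
    (∃ x y, u = ip x ∧ v = ip y ∧ x ≤ y) ∨ (∃ x y, u = iq x ∧ v = iq y ∧ x ≤ y) ∨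
      ∃ x y, u = ip x ∧ v = iq y ∧ x ∉ Set.range P.t ∧ y ∉ Set.range Q.s
  s_eq : ∀ i, R.s i = ip (P.s (Fin.cast hn i))
  t_eq : ∀ i, R.t i = iq (Q.t (Fin.cast hm i))

theorem IsGluing.nonempty_witness {P Q R : Iposet} (h : IsGluing P Q R) :
    Nonempty (GluingWitness P Q R) := by
  obtain ⟨h, hn, hm, ip, iq, h₁, h₂, h₃, h₄, h₅, h₆, h₇, h₈⟩ := h
  exact ⟨⟨h, hn, hm, ip, iq, h₁, h₂, h₃, h₄, h₅, h₆, h₇, h₈⟩⟩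

namespace ParallelWitness

variable {P Q R : Iposet} (W : ParallelWitness P Q R)

theorem s_cases (ι : Fin R.n) :
    (∃ i : Fin P.n, ι.val = i.val ∧ R.s ι = W.ip (P.s i)) ∨
      ∃ j : Fin Q.n, ι.val = P.n + j.val ∧ R.s ι = W.iq (Q.s j) :=
  Fin.exists_val_eq_or_val_eq_add W.hn W.s_left W.s_right ι

theorem t_cases (ι : Fin R.m) :
    (∃ i : Fin P.m, ι.val = i.val ∧ R.t ι = W.ip (P.t i)) ∨
      ∃ j : Fin Q.m, ι.val = P.m + j.val ∧ R.t ι = W.iq (Q.t j) :=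
  Fin.exists_val_eq_or_val_eq_add W.hm W.t_left W.t_right ι

theorem exists_of_s_eq_iq {ι : Fin R.n} {y : Q.carrier} (h : R.s ι = W.iq y) :
    ∃ j : Fin Q.n, ι.val = P.n + j.val ∧ y = Q.s j := by
  rcases W.s_cases ι with ⟨i, -, hi⟩ | ⟨j, hj, hs⟩
  · exact absurd (hi.symm.trans h) (W.ip_ne_iq _ _)
  · exact ⟨j, hj, W.iq_inj (h.symm.trans hs)⟩

theorem exists_of_t_eq_iq {ι : Fin R.m} {y : Q.carrier} (h : R.t ι = W.iq y) :
    ∃ j : Fin Q.m, ι.val = P.m + j.val ∧ y = Q.t j := by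
  rcases W.t_cases ι with ⟨i, -, hi⟩ | ⟨j, hj, ht⟩
  · exact absurd (hi.symm.trans h) (W.ip_ne_iq _ _)
  · exact ⟨j, hj, W.iq_inj (h.symm.trans ht)⟩

theorem iq_mem_range_s_iff (y : Q.carrier) : W.iq y ∈ Set.range R.s ↔ y ∈ Set.range Q.s := by
  constructor
  · rintro ⟨ι, h⟩
    obtain ⟨j, -, rfl⟩ := W.exists_of_s_eq_iq h
    exact ⟨j, rfl⟩
  · rintro ⟨j, rfl⟩
    exact ⟨_, W.s_right j⟩

theorem iq_mem_range_t_iff (y : Q.carrier) : W.iq y ∈ Set.range R.t ↔ y ∈ Set.range Q.t := by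
  constructor
  · rintro ⟨ι, h⟩
    obtain ⟨j, -, rfl⟩ := W.exists_of_t_eq_iq h
    exact ⟨j, rfl⟩
  · rintro ⟨j, rfl⟩
    exact ⟨_, W.t_right j⟩

theorem le_iff_of_forall_eq {e : P.carrier} (he : ∀ x, x = e) (u v : R.carrier) :
    u ≤ v ↔ (u = W.ip e ∧ v = W.ip e) ∨ ∃ x y, u = W.iq x ∧ v = W.iq y ∧ x ≤ y := by
  rw [W.le_iff]
  refine or_congr ⟨?_, ?_⟩ Iff.rfl
  · rintro ⟨x, y, rfl, rfl, -⟩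
    rw [he x, he y]
    exact ⟨rfl, rfl⟩
  · rintro ⟨rfl, rfl⟩
    exact ⟨e, e, rfl, rfl, le_rfl⟩

end ParallelWitness

/-- A presentation of `R` as `1_{k,ℓ} ⊗ (P * Q)`, where `pt` is the point of `1_{k,ℓ}`. -/
structure PointTensorGluing (k l : ℕ) (P Q R : Iposet) where
  hn : R.n = k + P.n
  hm : R.m = l + Q.m
  pt : R.carrier
  ip : P.carrier → R.carrier
  iq : Q.carrier → R.carrier
  ip_inj : Function.Injective ip
  iq_inj : Function.Injective iq
  cover : ∀ r, r = pt ∨ (∃ x, r = ip x) ∨ ∃ y, r = iq y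
  pt_ne_ip : ∀ x, pt ≠ ip x
  pt_ne_iq : ∀ y, pt ≠ iq y
  glue : ∀ (i : Fin P.m) (j : Fin Q.n), i.val = j.val → ip (P.t i) = iq (Q.s j)
  glue_back : ∀ x y, ip x = iq y →
    ∃ (i : Fin P.m) (j : Fin Q.n), i.val = j.val ∧ x = P.t i ∧ y = Q.s j
  le_iff : ∀ u v, u ≤ v ↔
    (u = pt ∧ v = pt) ∨ (∃ x y, u = ip x ∧ v = ip y ∧ x ≤ y) ∨
      (∃ x y, u = iq x ∧ v = iq y ∧ x ≤ y) ∨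
        ∃ x y, u = ip x ∧ v = iq y ∧ x ∉ Set.range P.t ∧ y ∉ Set.range Q.s
  s_cases : ∀ i : Fin R.n,
    (i.val < k ∧ R.s i = pt) ∨ ∃ j : Fin P.n, i.val = k + j.val ∧ R.s i = ip (P.s j)
  t_cases : ∀ i : Fin R.m,
    (i.val < l ∧ R.t i = pt) ∨ ∃ j : Fin Q.m, i.val = l + j.val ∧ R.t i = iq (Q.t j)

namespace PointTensorGluing

variable {k l : ℕ} {P Q R R' : Iposet} (W : PointTensorGluing k l P Q R)
  (W' : PointTensorGluing k l P Q R')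

open Classical in
noncomputable def map (r : R.carrier) : R'.carrier :=
  if h : ∃ x, r = W.ip x then W'.ip h.choose
  else if h : ∃ y, r = W.iq y then W'.iq h.choose
  else W'.pt

theorem map_ip (x : P.carrier) : W.map W' (W.ip x) = W'.ip x := by
  have h : ∃ x', W.ip x = W.ip x' := ⟨x, rfl⟩
  rw [map, dif_pos h, ← W.ip_inj h.choose_spec]

theorem map_iq (y : Q.carrier) : W.map W' (W.iq y) = W'.iq y := by
  by_cases h : ∃ x, W.iq y = W.ip x
  · obtain ⟨i, j, hij, hx, hy⟩ := W.glue_back _ _ h.choose_spec.symm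
    rw [map, dif_pos h, hx, W'.glue i j hij, hy]
  · have h' : ∃ y', W.iq y = W.iq y' := ⟨y, rfl⟩
    rw [map, dif_neg h, dif_pos h', ← W.iq_inj h'.choose_spec]

theorem map_pt : W.map W' W.pt = W'.pt := by
  have hp : ¬∃ x, W.pt = W.ip x := fun ⟨x, h⟩ => W.pt_ne_ip x h
  have hq : ¬∃ y, W.pt = W.iq y := fun ⟨y, h⟩ => W.pt_ne_iq y h
  rw [map, dif_neg hp, dif_neg hq]

theorem map_map (r : R.carrier) : W'.map W (W.map W' r) = r := by
  rcases W.cover r with rfl | ⟨x, rfl⟩ | ⟨y, rfl⟩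
  · rw [map_pt, map_pt]
  · rw [map_ip, map_ip]
  · rw [map_iq, map_iq]

noncomputable def equiv : R.carrier ≃ R'.carrier :=
  ⟨W.map W', W'.map W, W.map_map W', W'.map_map W⟩

theorem equiv_le_equiv_iff (u v : R.carrier) : W.equiv W' u ≤ W.equiv W' v ↔ u ≤ v := by
  have hF : ∀ r, W.equiv W' r = W.map W' r := fun _ => rfl
  simp only [W.le_iff, W'.le_iff, ← W.map_pt W', ← W.map_ip W', ← W.map_iq W', ← hF,
    (W.equiv W').injective.eq_iff]

theorem iso (W : PointTensorGluing k l P Q R) (W' : PointTensorGluing k l P Q R') :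
    Iso R R' := by
  refine ⟨W.hn.trans W'.hn.symm, W.hm.trans W'.hm.symm, W.equiv W',
    fun u v => (W.equiv_le_equiv_iff W' u v).symm, fun i => ?_, fun i => ?_⟩
  · rcases W.s_cases i with ⟨hi, hs⟩ | ⟨j, hi, hs⟩ <;>
      rcases W'.s_cases (Fin.cast (W.hn.trans W'.hn.symm) i) with ⟨hi', hs'⟩ | ⟨j', hi', hs'⟩ <;>
      simp only [Fin.val_cast] at hi'
    · exact hs.symm ▸ hs'.symm ▸ W.map_pt W'
    · omega
    · omega
    · obtain rfl : j = j' := Fin.ext (by omega)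
      exact hs.symm ▸ hs'.symm ▸ W.map_ip W' _
  · rcases W.t_cases i with ⟨hi, ht⟩ | ⟨j, hi, ht⟩ <;>
      rcases W'.t_cases (Fin.cast (W.hm.trans W'.hm.symm) i) with ⟨hi', ht'⟩ | ⟨j', hi', ht'⟩ <;>
      simp only [Fin.val_cast] at hi'
    · exact ht.symm ▸ ht'.symm ▸ W.map_pt W'
    · omega
    · omega
    · obtain rfl : j = j' := Fin.ext (by omega)
      exact ht.symm ▸ ht'.symm ▸ W.map_iq W' _

theorem le_iff_of_parallel_gluing {E G P Q R : Iposet} (WR : ParallelWitness E G R)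
    (WG : GluingWitness P Q G) {e : E.carrier} (he : ∀ x, x = e) (u v : R.carrier) :
    u ≤ v ↔ (u = WR.ip e ∧ v = WR.ip e) ∨
      (∃ x y, u = WR.iq (WG.ip x) ∧ v = WR.iq (WG.ip y) ∧ x ≤ y) ∨
      (∃ x y, u = WR.iq (WG.iq x) ∧ v = WR.iq (WG.iq y) ∧ x ≤ y) ∨
      ∃ x y, u = WR.iq (WG.ip x) ∧ v = WR.iq (WG.iq y) ∧ x ∉ Set.range P.t ∧
        y ∉ Set.range Q.s := by
  rw [WR.le_iff_of_forall_eq he]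
  refine or_congr_right ⟨?_, ?_⟩
  · rintro ⟨z, z', rfl, rfl, hzz'⟩
    rcases (WG.le_iff z z').mp hzz' with ⟨x, y, rfl, rfl, h⟩ | ⟨x, y, rfl, rfl, h⟩ |
      ⟨x, y, rfl, rfl, h⟩
    exacts [Or.inl ⟨x, y, rfl, rfl, h⟩, Or.inr (Or.inl ⟨x, y, rfl, rfl, h⟩),
      Or.inr (Or.inr ⟨x, y, rfl, rfl, h⟩)]
  · rintro (⟨x, y, rfl, rfl, h⟩ | ⟨x, y, rfl, rfl, h⟩ | ⟨x, y, rfl, rfl, h⟩)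
    exacts [⟨_, _, rfl, rfl, (WG.le_iff _ _).mpr (Or.inl ⟨x, y, rfl, rfl, h⟩)⟩,
      ⟨_, _, rfl, rfl, (WG.le_iff _ _).mpr (Or.inr (Or.inl ⟨x, y, rfl, rfl, h⟩))⟩,
      ⟨_, _, rfl, rfl, (WG.le_iff _ _).mpr (Or.inr (Or.inr ⟨x, y, rfl, rfl, h⟩))⟩]

def ofParallelOfGluing {k l : ℕ} {E G P Q R : Iposet} (WR : ParallelWitness E G R)
    (WG : GluingWitness P Q G) {e : E.carrier} (he : ∀ x, x = e) (hk : E.n = k)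
    (hl : E.m = l) : PointTensorGluing k l P Q R where
  hn := by rw [← WR.hn, hk, WG.hn]
  hm := by rw [← WR.hm, hl, WG.hm]
  pt := WR.ip e
  ip := WR.iq ∘ WG.ip
  iq := WR.iq ∘ WG.iq
  ip_inj := WR.iq_inj.comp WG.ip_inj
  iq_inj := WR.iq_inj.comp WG.iq_inj
  cover r := by
    rcases WR.cover r with ⟨x, rfl⟩ | ⟨z, rfl⟩
    · exact Or.inl (congrArg WR.ip (he x))
    · rcases WG.cover z with ⟨x, rfl⟩ | ⟨y, rfl⟩
      exacts [Or.inr (Or.inl ⟨x, rfl⟩), Or.inr (Or.inr ⟨y, rfl⟩)]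
  pt_ne_ip _ := WR.ip_ne_iq _ _
  pt_ne_iq _ := WR.ip_ne_iq _ _
  glue i j hij := by
    obtain rfl : j = Fin.cast WG.h i := Fin.ext hij.symm
    exact congrArg WR.iq (WG.glue i)
  glue_back x y h := by
    obtain ⟨i, hx, hy⟩ := WG.glue_back x y (WR.iq_inj h)
    exact ⟨i, _, rfl, hx, hy⟩
  le_iff := le_iff_of_parallel_gluing WR WG he
  s_cases i := by
    rcases WR.s_cases i with ⟨i', hi, hs⟩ | ⟨j, hi, hs⟩
    · exact Or.inl ⟨hk ▸ hi ▸ i'.isLt, hs.trans (congrArg WR.ip (he _))⟩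
    · refine Or.inr ⟨Fin.cast WG.hn j, by simp only [Fin.val_cast]; omega, ?_⟩
      rw [hs, WG.s_eq]
      rfl
  t_cases i := by
    rcases WR.t_cases i with ⟨i', hi, ht⟩ | ⟨j, hi, ht⟩
    · exact Or.inl ⟨hl ▸ hi ▸ i'.isLt, ht.trans (congrArg WR.ip (he _))⟩
    · refine Or.inr ⟨Fin.cast WG.hm j, by simp only [Fin.val_cast]; omega, ?_⟩
      rw [ht, WG.t_eq]
      rfl

section GluingOfParallels

variable {E1 E2 P Q A B L : Iposet} (WA : ParallelWitness E1 P A) (WB : ParallelWitness E2 Q B)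
  (WL : GluingWitness A B L)

theorem ip_ip_eq_iq_ip {e1 : E1.carrier} {e2 : E2.carrier} (he1 : ∀ x, x = e1)
    (he2 : ∀ x, x = e2) (h1 : E1.m = 1) (h2 : E2.n = 1) :
    WL.ip (WA.ip e1) = WL.iq (WB.ip e2) := by
  have hglue := WL.glue (Fin.cast WA.hm (Fin.castAdd P.m ⟨0, by omega⟩))
  rw [WA.t_left, he1 (E1.t _)] at hglue
  rw [hglue]
  rcases WB.s_cases (Fin.cast WL.h (Fin.cast WA.hm (Fin.castAdd P.m ⟨0, by omega⟩))) with
    ⟨i, -, hs⟩ | ⟨j, hj, -⟩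
  · rw [hs, ← he2]
  · simp only [Fin.val_cast, Fin.val_castAdd] at hj
    omega

theorem ip_iq_eq_iq_iq (h : E1.m = E2.n) (i : Fin P.m) (j : Fin Q.n) (hij : i.val = j.val) :
    WL.ip (WA.iq (P.t i)) = WL.iq (WB.iq (Q.s j)) := by
  rw [← WA.t_right i, WL.glue]
  rcases WB.s_cases (Fin.cast WL.h (Fin.cast WA.hm (Fin.natAdd E1.m i))) with
    ⟨i', hi', -⟩ | ⟨j', hj', hs⟩
  · simp only [Fin.val_cast, Fin.val_natAdd] at hi'
    omega
  · simp only [Fin.val_cast, Fin.val_natAdd] at hj'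
    obtain rfl : j' = j := Fin.ext (by omega)
    rw [hs]

theorem exists_of_ip_iq_eq_iq_iq (h : E1.m = E2.n) (x : P.carrier) (y : Q.carrier)
    (hxy : WL.ip (WA.iq x) = WL.iq (WB.iq y)) :
    ∃ (i : Fin P.m) (j : Fin Q.n), i.val = j.val ∧ x = P.t i ∧ y = Q.s j := by
  obtain ⟨ι, hx, hy⟩ := WL.glue_back _ _ hxy
  obtain ⟨i, hi, rfl⟩ := WA.exists_of_t_eq_iq hx.symm
  obtain ⟨j, hj, rfl⟩ := WB.exists_of_s_eq_iq hy.symm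
  simp only [Fin.val_cast] at hj
  exact ⟨i, j, by omega, rfl, rfl⟩

theorem le_iff_of_gluing_parallels {e1 : E1.carrier} {e2 : E2.carrier} (he1 : ∀ x, x = e1)
    (he2 : ∀ x, x = e2) (h1 : E1.m = 1) (h2 : E2.n = 1) (u v : L.carrier) :
    u ≤ v ↔ (u = WL.ip (WA.ip e1) ∧ v = WL.ip (WA.ip e1)) ∨
      (∃ x y, u = WL.ip (WA.iq x) ∧ v = WL.ip (WA.iq y) ∧ x ≤ y) ∨
      (∃ x y, u = WL.iq (WB.iq x) ∧ v = WL.iq (WB.iq y) ∧ x ≤ y) ∨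
      ∃ x y, u = WL.ip (WA.iq x) ∧ v = WL.iq (WB.iq y) ∧ x ∉ Set.range P.t ∧
        y ∉ Set.range Q.s := by
  have hpt := ip_ip_eq_iq_ip WA WB WL he1 he2 h1 h2
  have he1_mem : WA.ip e1 ∈ Set.range A.t :=
    ⟨_, (WA.t_left ⟨0, by omega⟩).trans (congrArg WA.ip (he1 _))⟩
  have he2_mem : WB.ip e2 ∈ Set.range B.s :=
    ⟨_, (WB.s_left ⟨0, by omega⟩).trans (congrArg WB.ip (he2 _))⟩
  rw [WL.le_iff]
  constructor
  · rintro (⟨a, a', rfl, rfl, h⟩ | ⟨b, b', rfl, rfl, h⟩ | ⟨a, b, rfl, rfl, ha, hb⟩)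
    · rcases (WA.le_iff_of_forall_eq he1 a a').mp h with ⟨rfl, rfl⟩ | ⟨x, y, rfl, rfl, hxy⟩
      exacts [Or.inl ⟨rfl, rfl⟩, Or.inr (Or.inl ⟨x, y, rfl, rfl, hxy⟩)]
    · rcases (WB.le_iff_of_forall_eq he2 b b').mp h with ⟨rfl, rfl⟩ | ⟨x, y, rfl, rfl, hxy⟩
      exacts [Or.inl ⟨hpt.symm, hpt.symm⟩, Or.inr (Or.inr (Or.inl ⟨x, y, rfl, rfl, hxy⟩))]
    · obtain ⟨x, rfl⟩ : ∃ x, a = WA.iq x := (WA.cover a).resolve_left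
        fun ⟨e, hae⟩ => ha (hae ▸ he1 e ▸ he1_mem)
      obtain ⟨y, rfl⟩ : ∃ y, b = WB.iq y := (WB.cover b).resolve_left
        fun ⟨e, hbe⟩ => hb (hbe ▸ he2 e ▸ he2_mem)
      exact Or.inr (Or.inr (Or.inr ⟨x, y, rfl, rfl, (WA.iq_mem_range_t_iff x).not.mp ha,
        (WB.iq_mem_range_s_iff y).not.mp hb⟩))
  · rintro (⟨rfl, rfl⟩ | ⟨x, y, rfl, rfl, h⟩ | ⟨x, y, rfl, rfl, h⟩ | ⟨x, y, rfl, rfl, hx, hy⟩)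
    · exact Or.inl ⟨_, _, rfl, rfl, le_rfl⟩
    · exact Or.inl ⟨_, _, rfl, rfl, (WA.le_iff _ _).mpr (Or.inr ⟨x, y, rfl, rfl, h⟩)⟩
    · exact Or.inr (Or.inl ⟨_, _, rfl, rfl, (WB.le_iff _ _).mpr (Or.inr ⟨x, y, rfl, rfl, h⟩)⟩)
    · exact Or.inr (Or.inr ⟨_, _, rfl, rfl, (WA.iq_mem_range_t_iff x).not.mpr hx,
        (WB.iq_mem_range_s_iff y).not.mpr hy⟩)

def ofGluingOfParallels {k l : ℕ} {e1 : E1.carrier} {e2 : E2.carrier} (he1 : ∀ x, x = e1)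
    (he2 : ∀ x, x = e2) (h1 : E1.m = 1) (h2 : E2.n = 1) (hk : E1.n = k) (hl : E2.m = l) :
    PointTensorGluing k l P Q L where
  hn := by rw [WL.hn, ← WA.hn, hk]
  hm := by rw [WL.hm, ← WB.hm, hl]
  pt := WL.ip (WA.ip e1)
  ip := WL.ip ∘ WA.iq
  iq := WL.iq ∘ WB.iq
  ip_inj := WL.ip_inj.comp WA.iq_inj
  iq_inj := WL.iq_inj.comp WB.iq_inj
  cover r := by
    rcases WL.cover r with ⟨a, rfl⟩ | ⟨b, rfl⟩
    · rcases WA.cover a with ⟨e, rfl⟩ | ⟨x, rfl⟩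
      exacts [Or.inl (he1 e ▸ rfl), Or.inr (Or.inl ⟨x, rfl⟩)]
    · rcases WB.cover b with ⟨e, rfl⟩ | ⟨y, rfl⟩
      exacts [Or.inl (he2 e ▸ (ip_ip_eq_iq_ip WA WB WL he1 he2 h1 h2).symm),
        Or.inr (Or.inr ⟨y, rfl⟩)]
  pt_ne_ip _ h := WA.ip_ne_iq _ _ (WL.ip_inj h)
  pt_ne_iq _ h := WB.ip_ne_iq _ _
    (WL.iq_inj ((ip_ip_eq_iq_ip WA WB WL he1 he2 h1 h2).symm.trans h))
  glue := ip_iq_eq_iq_iq WA WB WL (h1.trans h2.symm)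
  glue_back := exists_of_ip_iq_eq_iq_iq WA WB WL (h1.trans h2.symm)
  le_iff := le_iff_of_gluing_parallels WA WB WL he1 he2 h1 h2
  s_cases i := by
    rcases WA.s_cases (Fin.cast WL.hn i) with ⟨i', hi, hs⟩ | ⟨j, hi, hs⟩ <;>
      simp only [Fin.val_cast] at hi
    · exact Or.inl ⟨hk ▸ hi ▸ i'.isLt, by rw [WL.s_eq, hs, ← he1]⟩
    · exact Or.inr ⟨j, by omega, by rw [WL.s_eq, hs]; rfl⟩
  t_cases i := by
    rcases WB.t_cases (Fin.cast WL.hm i) with ⟨i', hi, ht⟩ | ⟨j, hi, ht⟩ <;>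
      simp only [Fin.val_cast] at hi
    · exact Or.inl ⟨hl ▸ hi ▸ i'.isLt, by
        rw [WL.t_eq, ht, he2 (E2.t i'), ip_ip_eq_iq_ip WA WB WL he1 he2 h1 h2]⟩
    · exact Or.inr ⟨j, by omega, by rw [WL.t_eq, ht]; rfl⟩

end GluingOfParallels

end PointTensorGluing

end Iposet

theorem singleton_interchange_general (k l : ℕ)
    (P Q E1 E2 E3 A B LHS PQ RHS : Iposet)
    (hE1 : IsIdpos k 1 E1) (hE2 : IsIdpos 1 l E2) (hE3 : IsIdpos k l E3)
    (hA : Iposet.IsParallel E1 P A) (hB : Iposet.IsParallel E2 Q B)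
    (hLHS : Iposet.IsGluing A B LHS)
    (hPQ : Iposet.IsGluing P Q PQ)
    (hRHS : Iposet.IsParallel E3 PQ RHS) :
    Iposet.Iso LHS RHS := by
  obtain ⟨hk1, h1, e1, he1⟩ := hE1
  obtain ⟨h2, hl2, e2, he2⟩ := hE2
  obtain ⟨hk3, hl3, e3, he3⟩ := hE3
  obtain ⟨WA⟩ := hA.nonempty_witness
  obtain ⟨WB⟩ := hB.nonempty_witness
  obtain ⟨WL⟩ := hLHS.nonempty_witness
  obtain ⟨WPQ⟩ := hPQ.nonempty_witness
  obtain ⟨WR⟩ := hRHS.nonempty_witness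
  exact (Iposet.PointTensorGluing.ofGluingOfParallels WA WB WL he1 he2 h1 h2 hk1 hl2).iso
    (Iposet.PointTensorGluing.ofParallelOfGluing WR WPQ he3 hk3 hl3)

/-- Equational interchange for singletons: for `P : 1 → m`, `Q : m → 1` and
`k, ℓ ∈ {0,1}`, `(1_{k,1} ⊗ P) * (1_{1,ℓ} ⊗ Q) = 1_{k,ℓ} ⊗ (P * Q)`. -/
theorem singleton_interchange (k l : ℕ) (hk : k ≤ 1) (hl : l ≤ 1)
    (P Q E1 E2 E3 A B LHS PQ RHS : Iposet)
    (hPn : P.n = 1) (hQm : Q.m = 1)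
    (hE1 : IsIdpos k 1 E1) (hE2 : IsIdpos 1 l E2) (hE3 : IsIdpos k l E3)
    (hA : Iposet.IsParallel E1 P A) (hB : Iposet.IsParallel E2 Q B)
    (hLHS : Iposet.IsGluing A B LHS)
    (hPQ : Iposet.IsGluing P Q PQ)
    (hRHS : Iposet.IsParallel E3 PQ RHS) :
    Iposet.Iso LHS RHS :=
  singleton_interchange_general k l P Q E1 E2 E3 A B LHS PQ RHS hE1 hE2 hE3 hA hB hLHS hPQ hRHS
end

section
/- Decomposition lemma: suppose an iposet P satisfies P = P1 ⊗ P2 = Q1 * Q2 where P1 ≠ id_0 ≠ P2, Q1 is not of the form (f_k, [n], id) : k → n and Q2 is not of the form (id, [n], f_k) : n → k for any k ≤ n (i.e., neither Q1 nor Q2 is a 'generalized identity'). Then at least one of P1, P2 has discrete underlying order (is a parallel composition of singleton iposets). -/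
/-!
Gluing `Q1 * Q2` places every non-target point of `Q1` below every non-source point of `Q2`, so
once both sets are nonempty, all these "core" points lie in one connected component of the
comparability graph. A parallel composition has no comparabilities between its summands, so the
core lies entirely in one summand. The other summand meets only glued interface points, which are
maximal in `Q1` and minimal in `Q2`; hence no two distinct of them are comparable, and that summand
is discrete.
-/

open Set Function Relation

theorem Relation.EqvGen.mem_iff_mem {α : Type*} {r : α → α → Prop} {S : Set α}
    (hS : ∀ a b, r a b → (a ∈ S ↔ b ∈ S)) {a b : α} (h : EqvGen r a b) : a ∈ S ↔ b ∈ S :=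
  (Equivalence.eqvGen_iff (r := fun a b => (a ∈ S ↔ b ∈ S))
    ⟨fun _ => Iff.rfl, Iff.symm, Iff.trans⟩).mp (EqvGen.mono hS _ _ h)

namespace Iposet

theorem IsDiscrete.of_orderEmbedding {P : Iposet} {Y : Type*} [Preorder Y] {C : Set Y}
    (hC : ∀ u v, u ∉ C → v ∉ C → u ≤ v → u = v) (j : P.carrier ↪o Y)
    (hj : Disjoint (range j) C) : P.IsDiscrete := fun x y hxy =>
  j.injective <| hC _ _ (hj.notMem_of_mem_left (mem_range_self x))
    (hj.notMem_of_mem_left (mem_range_self y)) (j.le_iff_le.mpr hxy)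

theorem IsParallel.exists_orderEmbedding {P1 P2 X : Iposet} (hpar : IsParallel P1 P2 X) :
    ∃ (j1 : P1.carrier ↪o X.carrier) (j2 : P2.carrier ↪o X.carrier),
      (∀ u v, u ≤ v → (u ∈ range j1 ↔ v ∈ range j1)) ∧ range j2 = (range j1)ᶜ := by
  obtain ⟨-, -, jp, jq, hjp, hjq, hcov, hdisj, hord, -⟩ := hpar
  have hle_jp : ∀ x y, jp x ≤ jp y ↔ x ≤ y := fun x y => by
    rw [hord]
    refine ⟨?_, fun hxy => Or.inl ⟨x, y, rfl, rfl, hxy⟩⟩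
    rintro (⟨x', y', hx, hy, hxy⟩ | ⟨x', -, hx, -, -⟩)
    · rwa [hjp hx, hjp hy]
    · exact absurd hx (hdisj x x')
  have hle_jq : ∀ x y, jq x ≤ jq y ↔ x ≤ y := fun x y => by
    rw [hord]
    refine ⟨?_, fun hxy => Or.inr ⟨x, y, rfl, rfl, hxy⟩⟩
    rintro (⟨x', -, hx, -, -⟩ | ⟨x', y', hx, hy, hxy⟩)
    · exact absurd hx.symm (hdisj x' x)
    · rwa [hjq hx, hjq hy]
  refine ⟨OrderEmbedding.ofMapLEIff jp hle_jp, OrderEmbedding.ofMapLEIff jq hle_jq, ?_, ?_⟩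
  · intro u v huv
    rcases (hord u v).mp huv with ⟨x, y, rfl, rfl, -⟩ | ⟨x, y, rfl, rfl, -⟩
    · exact iff_of_true (mem_range_self x) (mem_range_self y)
    · refine iff_of_false ?_ ?_ <;> rintro ⟨z, hz⟩
      exacts [hdisj z x hz, hdisj z y hz]
  · ext u
    refine ⟨?_, fun hu => ?_⟩
    · rintro ⟨y, rfl⟩ ⟨x, hx⟩
      exact hdisj x y hx
    · rcases hcov u with ⟨x, rfl⟩ | ⟨y, rfl⟩
      exacts [absurd (mem_range_self x) hu, mem_range_self y]

theorem IsGluing.exists_core {Q1 Q2 X : Iposet} (hglue : IsGluing Q1 Q2 X)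
    (hQ1 : ¬ Surjective Q1.t) (hQ2 : ¬ Surjective Q2.s) :
    ∃ (c : X.carrier) (C : Set X.carrier), (∀ u ∈ C, EqvGen (· ≤ ·) c u) ∧
      ∀ u v, u ∉ C → v ∉ C → u ≤ v → u = v := by
  obtain ⟨-, -, -, ip, iq, -, -, -, -, -, hord, -⟩ := hglue
  obtain ⟨a, ha⟩ : ∃ a, a ∉ range Q1.t := not_forall.mp hQ1
  obtain ⟨b, hb⟩ : ∃ b, b ∉ range Q2.s := not_forall.mp hQ2
  have hcross : ∀ x y, x ∉ range Q1.t → y ∉ range Q2.s → ip x ≤ iq y := fun x y hx hy =>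
    (hord _ _).mpr (Or.inr (Or.inr ⟨x, y, rfl, rfl, hx, hy⟩))
  refine ⟨iq b, ip '' (range Q1.t)ᶜ ∪ iq '' (range Q2.s)ᶜ, ?_, fun u v hu hv huv => ?_⟩
  · rintro _ (⟨x, hx, rfl⟩ | ⟨y, hy, rfl⟩)
    · exact (EqvGen.rel _ _ (hcross x b hx hb)).symm
    · exact (EqvGen.rel _ _ (hcross a b ha hb)).symm.trans _ _ _
        (EqvGen.rel _ _ (hcross a y ha hy))
  · rcases (hord u v).mp huv with ⟨x, y, rfl, rfl, hxy⟩ | ⟨x, y, rfl, rfl, hxy⟩ |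
      ⟨x, y, rfl, -, hx, -⟩
    · obtain ⟨i, rfl⟩ : x ∈ range Q1.t := by_contra fun hx => hu (Or.inl ⟨x, hx, rfl⟩)
      exact congrArg ip (hxy.eq_of_not_lt (Q1.t_max i y))
    · obtain ⟨i, rfl⟩ : y ∈ range Q2.s := by_contra fun hy => hv (Or.inr ⟨y, hy, rfl⟩)
      exact congrArg iq (hxy.eq_of_not_lt' (Q2.s_min i x)).symm
    · exact absurd (Or.inl ⟨x, hx, rfl⟩) hu

end Iposet

theorem decomposition_lemma_general (X P1 P2 Q1 Q2 : Iposet)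
    (hpar : Iposet.IsParallel P1 P2 X) (hglue : Iposet.IsGluing Q1 Q2 X)
    (hQ1 : ¬ Function.Surjective Q1.t) (hQ2 : ¬ Function.Surjective Q2.s) :
    Iposet.IsDiscrete P1 ∨ Iposet.IsDiscrete P2 := by
  obtain ⟨c, C, hconn, hdisc⟩ := hglue.exists_core hQ1 hQ2
  obtain ⟨j1, j2, hclosed, hrange⟩ := hpar.exists_orderEmbedding
  by_cases hc : c ∈ range j1
  · have hC : C ⊆ range j1 := fun u hu => ((hconn u hu).mem_iff_mem hclosed).mp hc
    refine Or.inr (Iposet.IsDiscrete.of_orderEmbedding hdisc j2 ?_)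
    rwa [hrange, disjoint_compl_left_iff_subset]
  · have hC : C ⊆ (range j1)ᶜ := fun u hu =>
      ((hconn u hu).mem_iff_mem fun u v huv => not_congr (hclosed u v huv)).mp hc
    exact Or.inl (Iposet.IsDiscrete.of_orderEmbedding hdisc j1
      (subset_compl_iff_disjoint_left.mp hC))

/-- Decomposition lemma: if `P = P1 ⊗ P2 = Q1 * Q2` with `P1, P2` nonempty,
`Q1` not a generalized identity `(f_k, [n], id) : k → n` (i.e. its target
interface is not all of `Q1`) and `Q2` not a generalized identity
`(id, [n], f_k) : n → k` (i.e. its source interface is not all of `Q2`),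
then `P1` or `P2` has discrete underlying order. -/
theorem decomposition_lemma (X P1 P2 Q1 Q2 : Iposet)
    (hpar : Iposet.IsParallel P1 P2 X) (hglue : Iposet.IsGluing Q1 Q2 X)
    (hP1 : ¬ Iposet.IsEmptyIp P1) (hP2 : ¬ Iposet.IsEmptyIp P2)
    (hQ1 : ¬ Function.Surjective Q1.t) (hQ2 : ¬ Function.Surjective Q2.s) :
    Iposet.IsDiscrete P1 ∨ Iposet.IsDiscrete P2 :=
  decomposition_lemma_general X P1 P2 Q1 Q2 hpar hglue hQ1 hQ2
end

section
/- The gluing-parallel hierarchy does not collapse: with Q the singleton poset, P_1 = Q;Q, and P_{n+1} = Q;(P_n ⊗ P_n) (serial and parallel composition of posets, considered as iposets with empty interfaces), one has P_n ∈ C_{2n} \ C_{2n−1} for all n ≥ 1; hence C_{2n−1} ⊊ C_{2n} for all n ≥ 1. -/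
/-- `ParCl C` is the closure of `C` under finite parallel compositions
(including the empty one). -/
inductive ParCl (C : Iposet → Prop) : Iposet → Prop
  | of {P : Iposet} : C P → ParCl C P
  | empty {P : Iposet} : Iposet.IsEmptyIp P → ParCl C P
  | par {P Q R : Iposet} : ParCl C P → ParCl C Q → Iposet.IsParallel P Q R → ParCl C R

/-- `GlueCl C` is the closure of `C` under finite (nonempty) gluing compositions. -/
inductive GlueCl (C : Iposet → Prop) : Iposet → Prop
  | of {P : Iposet} : C P → GlueCl C P
  | glue {P Q R : Iposet} : GlueCl C P → GlueCl C Q → Iposet.IsGluing P Q R → GlueCl C R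

/-- The hierarchy `C_0 = S`, `C_{2n+1} = C_{2n}^⊗`, `C_{2n+2} = C_{2n+1}^*`. -/
def Cc : ℕ → Iposet → Prop
  | 0 => Iposet.IsSingletonIp
  | (k+1) => if k % 2 = 0 then ParCl (Cc k) else GlueCl (Cc k)

/-- The dual hierarchy `D_0 = S`, `D_{2n+1} = D_{2n}^*`, `D_{2n+2} = D_{2n+1}^⊗`. -/
def Dc : ℕ → Iposet → Prop
  | 0 => Iposet.IsSingletonIp
  | (k+1) => if k % 2 = 0 then GlueCl (Dc k) else ParCl (Dc k)

/-- A singleton iposet with empty interfaces (the poset `Q = •`). -/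
def IsSingl0 (E : Iposet) : Prop :=
  Iposet.IsSingletonIp E ∧ E.n = 0 ∧ E.m = 0

/-- The witness sequence: `P_1 = Q ; Q` and `P_{n+1} = Q ; (P_n ⊗ P_n)`,
where serial composition of posets with empty interfaces is gluing
composition of the corresponding iposets. -/
inductive IsPseq : ℕ → Iposet → Prop
  | one {S S' R : Iposet} :
      IsSingl0 S → IsSingl0 S' → Iposet.IsGluing S S' R → IsPseq 1 R
  | succ {n : ℕ} {S A B C R : Iposet} :
      IsSingl0 S → IsPseq n A → IsPseq n B →
      Iposet.IsParallel A B C → Iposet.IsGluing S C R → IsPseq (n + 1) R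


/-- `ShT n α S` : the subset `S` of the poset `α`, with induced order, is
isomorphic to the witness poset `T n` (`T 1` = 2-chain,
`T (n+1) = point ⊕ (T n ⊔ T n)`). -/
def ShT : ℕ → (α : Type) → [inst : PartialOrder α] → Set α → Prop
  | 0, _, _, _ => False
  | 1, _, _, S => ∃ x y, x < y ∧ S = {x, y}
  | (n+2), α, _, S => ∃ m ∈ S, (∀ x ∈ S, x ≠ m → m < x) ∧
      ∃ U V : Set α, U ∪ V = S \ {m} ∧
        (∀ u ∈ U, ∀ v ∈ V, ¬ u ≤ v ∧ ¬ v ≤ u) ∧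
        ShT (n+1) α U ∧ ShT (n+1) α V

/-- `ShD n α S` : `S` with induced order is isomorphic to `T n ⊔ T n`. -/
def ShD (n : ℕ) (α : Type) [PartialOrder α] (S : Set α) : Prop :=
  ∃ U V : Set α, U ∪ V = S ∧
    (∀ u ∈ U, ∀ v ∈ V, ¬ u ≤ v ∧ ¬ v ≤ u) ∧
    ShT n α U ∧ ShT n α V

theorem ShT_succ_iff (n : ℕ) (hn : 1 ≤ n) (α : Type) [PartialOrder α] (S : Set α) :
    ShT (n+1) α S ↔ ∃ m ∈ S, (∀ x ∈ S, x ≠ m → m < x) ∧ ShD n α (S \ {m}) := by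
  obtain ⟨k, rfl⟩ : ∃ k, n = k + 1 := ⟨n - 1, by omega⟩
  rfl

theorem ShT_two : ∀ (n : ℕ), 1 ≤ n → ∀ (α : Type) [inst : PartialOrder α] (S : Set α),
    ShT n α S → ∃ x ∈ S, ∃ y ∈ S, x < y
  | 1, _, α, _, S, ⟨x, y, hxy, hS⟩ => ⟨x, by simp [hS], y, by simp [hS], hxy⟩
  | (n+2), _, α, _, S, ⟨m, hm, hmin, U, V, hUV, _, hU, _⟩ => by
      obtain ⟨x, hx, _, _, _⟩ := ShT_two (n+1) (by omega) α U hU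
      have hxS : x ∈ S \ {m} := by rw [← hUV]; exact Or.inl hx
      exact ⟨m, hm, x, hxS.1, hmin x hxS.1 hxS.2⟩

theorem ShT_nonempty (n : ℕ) (hn : 1 ≤ n) (α : Type) [PartialOrder α] (S : Set α)
    (h : ShT n α S) : S.Nonempty := by
  obtain ⟨x, hx, -⟩ := ShT_two n hn α S h
  exact ⟨x, hx⟩

/-- A `T n`-shaped subset is "connected": it cannot be split by a
cross-incomparable cover. -/
theorem ShT_subset_or (n : ℕ) (hn : 1 ≤ n) (α : Type) [PartialOrder α] {S A B : Set α}
    (h : ShT n α S) (hcov : S ⊆ A ∪ B)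
    (hinc : ∀ a ∈ A, ∀ b ∈ B, a ∈ S → b ∈ S → ¬ a ≤ b ∧ ¬ b ≤ a) :
    S ⊆ A ∨ S ⊆ B := by
  match n, hn with
  | 1, _ =>
    obtain ⟨x, y, hxy, rfl⟩ := h
    have hxm : x ∈ ({x, y} : Set α) := by simp
    have hym : y ∈ ({x, y} : Set α) := by simp
    rcases hcov hxm with hxA | hxB
    · left
      intro z hz
      rcases hz with rfl | rfl
      · exact hxA
      · rcases hcov hym with h' | h'
        · exact h'
        · exact absurd hxy.le (hinc x hxA z h' hxm hym).1
    · right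
      intro z hz
      rcases hz with rfl | rfl
      · exact hxB
      · rcases hcov hym with h' | h'
        · exact absurd hxy.le (hinc z h' x hxB hym hxm).2
        · exact h'
  | (n+2), _ =>
    obtain ⟨m, hm, hmin, _, _, _, _, _, _⟩ := h
    rcases hcov hm with hmA | hmB
    · left
      intro z hz
      by_cases hzm : z = m
      · subst hzm; exact hmA
      · rcases hcov hz with h' | h'
        · exact h'
        · exact absurd (hmin z hz hzm).le (hinc m hmA z h' hm hz).1
    · right
      intro z hz
      by_cases hzm : z = m
      · subst hzm; exact hmB
      · rcases hcov hz with h' | h'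
        · exact absurd (hmin z hz hzm).le (hinc z h' m hmB hz hm).2
        · exact h'

section
variable {α β : Type} [PartialOrder α] [PartialOrder β]

theorem lt_iff_of_ord {f : α → β} (hinj : Function.Injective f)
    (hord : ∀ x y, x ≤ y ↔ f x ≤ f y) (x y : α) : x < y ↔ f x < f y := by
  rw [lt_iff_le_and_ne, lt_iff_le_and_ne, hord]
  constructor
  · rintro ⟨h1, h2⟩; exact ⟨h1, fun h => h2 (hinj h)⟩
  · rintro ⟨h1, h2⟩; exact ⟨h1, fun h => h2 (by rw [h])⟩

theorem ShT_image : ∀ (n : ℕ) {f : α → β}, Function.Injective f →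
    (∀ x y, x ≤ y ↔ f x ≤ f y) → ∀ (S : Set α), ShT n β (f '' S) ↔ ShT n α S
  | 0, f, hinj, hord, S => Iff.rfl
  | 1, f, hinj, hord, S => by
    constructor
    · rintro ⟨a, b, hab, hS⟩
      have ha : a ∈ f '' S := by rw [hS]; simp
      have hb : b ∈ f '' S := by rw [hS]; simp
      obtain ⟨x, hx, rfl⟩ := ha
      obtain ⟨y, hy, rfl⟩ := hb
      refine ⟨x, y, (lt_iff_of_ord hinj hord x y).2 hab, ?_⟩
      apply Set.eq_of_subset_of_subset
      · intro z hz
        have : f z ∈ ({f x, f y} : Set β) := by rw [← hS]; exact ⟨z, hz, rfl⟩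
        rcases this with h | h
        · left; exact hinj h
        · right; exact hinj h
      · rintro z (rfl | rfl) <;> assumption
    · rintro ⟨x, y, hxy, rfl⟩
      exact ⟨f x, f y, (lt_iff_of_ord hinj hord x y).1 hxy, by
        rw [Set.image_insert_eq, Set.image_singleton]⟩
  | (n+2), f, hinj, hord, S => by
    constructor
    · rintro ⟨m', hm', hmin', U', V', hUV', hinc', hU', hV'⟩
      obtain ⟨m, hm, rfl⟩ := hm'
      set U : Set α := {x ∈ S | f x ∈ U'} with hUdef
      set V : Set α := {x ∈ S | f x ∈ V'} with hVdef
      have hUsub : U' ⊆ f '' S := by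
        intro u hu
        have : u ∈ f '' S \ {f m} := by rw [← hUV']; exact Or.inl hu
        exact this.1
      have hVsub : V' ⊆ f '' S := by
        intro u hu
        have : u ∈ f '' S \ {f m} := by rw [← hUV']; exact Or.inr hu
        exact this.1
      have hfU : f '' U = U' := by
        apply Set.eq_of_subset_of_subset
        · rintro _ ⟨x, hx, rfl⟩; exact hx.2
        · intro u hu
          obtain ⟨x, hx, rfl⟩ := hUsub hu
          exact ⟨x, ⟨hx, hu⟩, rfl⟩
      have hfV : f '' V = V' := by
        apply Set.eq_of_subset_of_subset
        · rintro _ ⟨x, hx, rfl⟩; exact hx.2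
        · intro u hu
          obtain ⟨x, hx, rfl⟩ := hVsub hu
          exact ⟨x, ⟨hx, hu⟩, rfl⟩
      refine ⟨m, hm, ?_, U, V, ?_, ?_, ?_, ?_⟩
      · intro x hx hxm
        have : f x ∈ f '' S := ⟨x, hx, rfl⟩
        have hne : f x ≠ f m := fun h => hxm (hinj h)
        exact (lt_iff_of_ord hinj hord m x).2 (hmin' (f x) this hne)
      · apply Set.eq_of_subset_of_subset
        · rintro x (hx | hx)
          · refine ⟨hx.1, fun h => ?_⟩
            have : f x ∈ f '' S \ {f m} := by rw [← hUV']; exact Or.inl hx.2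
            exact this.2 (by rw [show x = m from h]; exact rfl)
          · refine ⟨hx.1, fun h => ?_⟩
            have : f x ∈ f '' S \ {f m} := by rw [← hUV']; exact Or.inr hx.2
            exact this.2 (by rw [show x = m from h]; exact rfl)
        · rintro x ⟨hxS, hxm⟩
          have : f x ∈ U' ∪ V' := by
            rw [hUV']
            exact ⟨⟨x, hxS, rfl⟩, fun h => hxm (hinj h)⟩
          rcases this with h | h
          · exact Or.inl ⟨hxS, h⟩
          · exact Or.inr ⟨hxS, h⟩
      · intro u hu v hv
        have := hinc' (f u) hu.2 (f v) hv.2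
        exact ⟨fun h => this.1 ((hord u v).1 h), fun h => this.2 ((hord v u).1 h)⟩
      · rw [← ShT_image (n+1) hinj hord U, hfU]; exact hU'
      · rw [← ShT_image (n+1) hinj hord V, hfV]; exact hV'
    · rintro ⟨m, hm, hmin, U, V, hUV, hinc, hU, hV⟩
      refine ⟨f m, ⟨m, hm, rfl⟩, ?_, f '' U, f '' V, ?_, ?_, ?_, ?_⟩
      · rintro _ ⟨x, hx, rfl⟩ hne
        exact (lt_iff_of_ord hinj hord m x).1 (hmin x hx fun h => hne (by rw [h]))
      · rw [← Set.image_union, hUV, Set.image_diff hinj, Set.image_singleton]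
      · rintro _ ⟨u, hu, rfl⟩ _ ⟨v, hv, rfl⟩
        have := hinc u hu v hv
        exact ⟨fun h => this.1 ((hord u v).2 h), fun h => this.2 ((hord v u).2 h)⟩
      · exact (ShT_image (n+1) hinj hord U).2 hU
      · exact (ShT_image (n+1) hinj hord V).2 hV

theorem ShD_image (n : ℕ) {f : α → β} (hinj : Function.Injective f)
    (hord : ∀ x y, x ≤ y ↔ f x ≤ f y) (S : Set α) : ShD n β (f '' S) ↔ ShD n α S := by
  constructor
  · rintro ⟨U', V', hUV', hinc', hU', hV'⟩
    set U : Set α := {x ∈ S | f x ∈ U'} with hUdef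
    set V : Set α := {x ∈ S | f x ∈ V'} with hVdef
    have hUsub : U' ⊆ f '' S := hUV' ▸ Set.subset_union_left
    have hVsub : V' ⊆ f '' S := hUV' ▸ Set.subset_union_right
    have hfU : f '' U = U' := by
      apply Set.eq_of_subset_of_subset
      · rintro _ ⟨x, hx, rfl⟩; exact hx.2
      · intro u hu
        obtain ⟨x, hx, rfl⟩ := hUsub hu
        exact ⟨x, ⟨hx, hu⟩, rfl⟩
    have hfV : f '' V = V' := by
      apply Set.eq_of_subset_of_subset
      · rintro _ ⟨x, hx, rfl⟩; exact hx.2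
      · intro u hu
        obtain ⟨x, hx, rfl⟩ := hVsub hu
        exact ⟨x, ⟨hx, hu⟩, rfl⟩
    refine ⟨U, V, ?_, ?_, ?_, ?_⟩
    · apply Set.eq_of_subset_of_subset
      · rintro x (hx | hx)
        · exact hx.1
        · exact hx.1
      · intro x hx
        have : f x ∈ U' ∪ V' := by rw [hUV']; exact ⟨x, hx, rfl⟩
        rcases this with h | h
        · exact Or.inl ⟨hx, h⟩
        · exact Or.inr ⟨hx, h⟩
    · intro u hu v hv
      have := hinc' (f u) hu.2 (f v) hv.2
      exact ⟨fun h => this.1 ((hord u v).1 h), fun h => this.2 ((hord v u).1 h)⟩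
    · rw [← ShT_image n hinj hord U, hfU]; exact hU'
    · rw [← ShT_image n hinj hord V, hfV]; exact hV'
  · rintro ⟨U, V, hUV, hinc, hU, hV⟩
    refine ⟨f '' U, f '' V, by rw [← Set.image_union, hUV], ?_, ?_, ?_⟩
    · rintro _ ⟨u, hu, rfl⟩ _ ⟨v, hv, rfl⟩
      have := hinc u hu v hv
      exact ⟨fun h => this.1 ((hord u v).2 h), fun h => this.2 ((hord v u).2 h)⟩
    · exact (ShT_image n hinj hord U).2 hU
    · exact (ShT_image n hinj hord V).2 hV

end
section GlueAnalysis

theorem glue_main {X Y R : Iposet} (hg : Iposet.IsGluing X Y R) :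
    (∀ n : ℕ, ShD (n+1) R.carrier Set.univ →
       ShD (n+1) Y.carrier Set.univ ∨ ShD (n+1) X.carrier Set.univ) ∧
    (∀ n : ℕ, ShT (n+2) R.carrier Set.univ →
       ShT (n+2) Y.carrier Set.univ ∨ ShT (n+2) X.carrier Set.univ ∨
         ShD (n+1) Y.carrier Set.univ) := by
  obtain ⟨h, hn, hm, ip, iq, hipinj, hiqinj, hcover, hid1, hid2, hord, hsR, htR⟩ := hg
  have hiqord : ∀ x y : Y.carrier, x ≤ y ↔ iq x ≤ iq y := by
    intro x y
    constructor
    · intro hxy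
      exact (hord _ _).2 (Or.inr (Or.inl ⟨x, y, rfl, rfl, hxy⟩))
    · intro hxy
      rcases (hord _ _).1 hxy with ⟨a, b, hua, hvb, hab⟩ | ⟨a, b, hua, hvb, hab⟩ |
        ⟨a, b, hua, hvb, hat, hbs⟩
      · obtain ⟨i, hai, hxi⟩ := hid2 a x hua.symm
        obtain ⟨j, hbj, hyj⟩ := hid2 b y hvb.symm
        have hab' : a = b := by
          subst hai
          by_contra hne
          exact X.t_max i b (lt_of_le_of_ne hab hne)
        rw [hab'] at hua
        have : x = y := hiqinj (hua.trans hvb.symm)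
        exact this ▸ le_refl x
      · rw [hiqinj hua, hiqinj hvb]; exact hab
      · obtain ⟨i, hai, -⟩ := hid2 a x hua.symm
        exact absurd ⟨i, hai.symm⟩ hat
  have hipord : ∀ x y : X.carrier, x ≤ y ↔ ip x ≤ ip y := by
    intro x y
    constructor
    · intro hxy
      exact (hord _ _).2 (Or.inl ⟨x, y, rfl, rfl, hxy⟩)
    · intro hxy
      rcases (hord _ _).1 hxy with ⟨a, b, hua, hvb, hab⟩ | ⟨a, b, hua, hvb, hab⟩ |
        ⟨a, b, hua, hvb, hat, hbs⟩
      · rw [hipinj hua, hipinj hvb]; exact hab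
      · obtain ⟨i, hxi, hai⟩ := hid2 x a hua
        obtain ⟨j, hyj, hbj⟩ := hid2 y b hvb
        have hab' : a = b := by
          subst hbj
          by_contra hne
          exact Y.s_min (Fin.cast h j) a (lt_of_le_of_ne hab hne)
        rw [hab'] at hua
        have : x = y := hipinj ((hua.trans hvb.symm))
        exact this ▸ le_refl x
      · obtain ⟨j, -, hbj⟩ := hid2 y b hvb
        exact absurd ⟨Fin.cast h j, hbj.symm⟩ hbs
  have hcov : ∀ r : R.carrier, r ∈ Set.range ip ∪ Set.range iq := by
    intro r
    rcases hcover r with ⟨x, rfl⟩ | ⟨y, rfl⟩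
    · exact Or.inl ⟨x, rfl⟩
    · exact Or.inr ⟨y, rfl⟩
  have fAB : ∀ u v : R.carrier, u ∈ Set.range ip \ Set.range iq →
      v ∈ Set.range iq \ Set.range ip → u < v := by
    rintro u v ⟨⟨x, rfl⟩, hunq⟩ ⟨⟨y, rfl⟩, hvnp⟩
    have hxt : x ∉ Set.range X.t := by
      rintro ⟨i, rfl⟩
      exact hunq ⟨Y.s (Fin.cast h i), (hid1 i).symm⟩
    have hys : y ∉ Set.range Y.s := by
      rintro ⟨j, rfl⟩
      refine hvnp ⟨X.t (Fin.cast h.symm j), ?_⟩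
      have hcc : Fin.cast h (Fin.cast h.symm j) = j := Fin.ext (by simp)
      rw [hid1, hcc]
    have hle : ip x ≤ iq y := (hord _ _).2 (Or.inr (Or.inr ⟨x, y, rfl, rfl, hxt, hys⟩))
    refine lt_of_le_of_ne hle ?_
    rintro heq
    exact hunq ⟨y, heq.symm⟩
  have fW : ∀ u v : R.carrier, u ∈ Set.range ip ∩ Set.range iq →
      v ∈ Set.range ip ∩ Set.range iq → u ≤ v → u = v := by
    rintro u v ⟨⟨x, rfl⟩, ⟨a, ha⟩⟩ ⟨⟨y, hy⟩, ⟨b, hb⟩⟩ huv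
    obtain ⟨i, hxi, hai⟩ := hid2 x a ha.symm
    obtain ⟨j, hyj, hbj⟩ := hid2 y b (hy.trans hb.symm)
    rcases (hord _ _).1 huv with ⟨c, d, huc, hvd, hcd⟩ | ⟨c, d, huc, hvd, hcd⟩ |
      ⟨c, d, huc, hvd, hct, hds⟩
    · have hc : c = X.t i := by rw [← hxi]; exact hipinj huc.symm
      have hcd' : c = d := by
        subst hc
        by_contra hne
        exact X.t_max i d (lt_of_le_of_ne hcd hne)
      rw [huc, hvd, ← hcd']
    · have hd : d = Y.s (Fin.cast h j) := by
        rw [← hbj]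
        apply hiqinj
        rw [← hvd, ← hb]
      have hcd' : c = d := by
        subst hd
        by_contra hne
        exact Y.s_min (Fin.cast h j) c (lt_of_le_of_ne hcd hne)
      rw [huc, hvd, ← hcd']
    · have hc : c = X.t i := by rw [← hxi]; exact hipinj huc.symm
      exact absurd ⟨i, hc.symm⟩ hct
  have htransD : ∀ k : ℕ, ShD k R.carrier (Set.range iq) → ShD k Y.carrier Set.univ := by
    intro k hk
    have himg := ShD_image k hiqinj hiqord Set.univ
    rw [Set.image_univ] at himg
    exact himg.1 hk
  have htransT : ∀ k : ℕ, ShT k R.carrier (Set.range iq) → ShT k Y.carrier Set.univ := by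
    intro k hk
    have himg := ShT_image k hiqinj hiqord Set.univ
    rw [Set.image_univ] at himg
    exact himg.1 hk
  have htransD' : ∀ k : ℕ, ShD k R.carrier (Set.range ip) → ShD k X.carrier Set.univ := by
    intro k hk
    have himg := ShD_image k hipinj hipord Set.univ
    rw [Set.image_univ] at himg
    exact himg.1 hk
  have htransT' : ∀ k : ℕ, ShT k R.carrier (Set.range ip) → ShT k X.carrier Set.univ := by
    intro k hk
    have himg := ShT_image k hipinj hipord Set.univ
    rw [Set.image_univ] at himg
    exact himg.1 hk
  constructor
  · -- ShD case
    intro n hD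
    by_cases hA : Set.range ip ⊆ Set.range iq
    · have hIQ : Set.range iq = (Set.univ : Set R.carrier) :=
        Set.eq_univ_of_forall fun r => (hcov r).elim (fun h' => hA h') id
      left
      exact htransD (n+1) (hIQ ▸ hD)
    · by_cases hB : Set.range iq ⊆ Set.range ip
      · have hIP : Set.range ip = (Set.univ : Set R.carrier) :=
          Set.eq_univ_of_forall fun r => (hcov r).elim id (fun h' => hB h')
        right
        exact htransD' (n+1) (hIP ▸ hD)
      · exfalso
        obtain ⟨a, haP, hanq⟩ := Set.not_subset.1 hA
        obtain ⟨b, hbQ, hbnp⟩ := Set.not_subset.1 hB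
        obtain ⟨U, V, hUV, hinc, hTU, hTV⟩ := hD
        have key : ∀ U V : Set R.carrier, U ∪ V = Set.univ →
            (∀ u ∈ U, ∀ v ∈ V, ¬ u ≤ v ∧ ¬ v ≤ u) →
            ShT (n+1) R.carrier V → a ∈ U → False := by
          intro U V hUV hinc hTV haU
          have hdisj : ∀ z, z ∈ U → z ∈ V → False :=
            fun z h1 h2 => (hinc z h1 z h2).1 le_rfl
          have hBU : ∀ b', b' ∈ Set.range iq \ Set.range ip → b' ∈ U := by
            intro b' hb'
            have hlt := fAB a b' ⟨haP, hanq⟩ hb'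
            have hmem : b' ∈ U ∪ V := by rw [hUV]; trivial
            rcases hmem with h1 | h1
            · exact h1
            · exact ((hinc a haU b' h1).1 hlt.le).elim
          have hAU : ∀ a', a' ∈ Set.range ip \ Set.range iq → a' ∈ U := by
            intro a' ha'
            have hbU : b ∈ U := hBU b ⟨hbQ, hbnp⟩
            have hlt := fAB a' b ha' ⟨hbQ, hbnp⟩
            have hmem : a' ∈ U ∪ V := by rw [hUV]; trivial
            rcases hmem with h1 | h1
            · exact h1
            · exact ((hinc b hbU a' h1).2 hlt.le).elim
          have hVW : ∀ v ∈ V, v ∈ Set.range ip ∩ Set.range iq := by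
            intro v hv
            rcases hcov v with h1 | h1
            · by_cases h2 : v ∈ Set.range iq
              · exact ⟨h1, h2⟩
              · exact (hdisj v (hAU v ⟨h1, h2⟩) hv).elim
            · by_cases h2 : v ∈ Set.range ip
              · exact ⟨h2, h1⟩
              · exact (hdisj v (hBU v ⟨h1, h2⟩) hv).elim
          obtain ⟨x, hxV, y, hyV, hxy⟩ := ShT_two (n+1) (by omega) _ V hTV
          exact hxy.ne (fW x y (hVW x hxV) (hVW y hyV) hxy.le)
        have hmem : a ∈ U ∪ V := by rw [hUV]; trivial
        rcases hmem with haU | haV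
        · exact key U V hUV hinc hTV haU
        · exact key V U (by rw [Set.union_comm]; exact hUV)
            (fun u hu v hv => ⟨(hinc v hv u hu).2, (hinc v hv u hu).1⟩) hTU haV
  · -- ShT case
    intro n hT
    by_cases hA : Set.range ip ⊆ Set.range iq
    · have hIQ : Set.range iq = (Set.univ : Set R.carrier) :=
        Set.eq_univ_of_forall fun r => (hcov r).elim (fun h' => hA h') id
      left
      exact htransT (n+2) (hIQ ▸ hT)
    · by_cases hB : Set.range iq ⊆ Set.range ip
      · have hIP : Set.range ip = (Set.univ : Set R.carrier) :=
          Set.eq_univ_of_forall fun r => (hcov r).elim id (fun h' => hB h')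
        right; left
        exact htransT' (n+2) (hIP ▸ hT)
      · right; right
        obtain ⟨a, haP, hanq⟩ := Set.not_subset.1 hA
        obtain ⟨b, hbQ, hbnp⟩ := Set.not_subset.1 hB
        obtain ⟨m, -, hmin, U, V, hUV, hinc, hTU, hTV⟩ := hT
        have hmB : m ∉ Set.range iq \ Set.range ip := by
          rintro hmem
          have hne : a ≠ m := fun e => hanq (e ▸ hmem.1)
          have h1 : m < a := hmin a trivial hne
          exact (fAB a m ⟨haP, hanq⟩ hmem).asymm h1
        have key : ∀ U V : Set R.carrier, U ∪ V = Set.univ \ {m} →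
            (∀ u ∈ U, ∀ v ∈ V, ¬ u ≤ v ∧ ¬ v ≤ u) →
            ShT (n+1) R.carrier V →
            ∀ a', a' ∈ Set.range ip \ Set.range iq → a' ≠ m → a' ∈ U → False := by
          intro U V hUV hinc hTV a' ha' hanem haU
          have hdisj : ∀ z, z ∈ U → z ∈ V → False :=
            fun z h1 h2 => (hinc z h1 z h2).1 le_rfl
          have hBU : ∀ b', b' ∈ Set.range iq \ Set.range ip → b' ∈ U := by
            intro b' hb'
            have hlt := fAB a' b' ha' hb'
            have hbne : b' ≠ m := fun e => hmB (e ▸ hb')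
            have hmem : b' ∈ U ∪ V := by rw [hUV]; exact ⟨trivial, hbne⟩
            rcases hmem with h1 | h1
            · exact h1
            · exact ((hinc a' haU b' h1).1 hlt.le).elim
          have hAU : ∀ a'', a'' ∈ Set.range ip \ Set.range iq → a'' ≠ m → a'' ∈ U := by
            intro a'' ha'' hne
            have hbU : b ∈ U := hBU b ⟨hbQ, hbnp⟩
            have hlt := fAB a'' b ha'' ⟨hbQ, hbnp⟩
            have hmem : a'' ∈ U ∪ V := by rw [hUV]; exact ⟨trivial, hne⟩
            rcases hmem with h1 | h1
            · exact h1
            · exact ((hinc b hbU a'' h1).2 hlt.le).elim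
          have hVW : ∀ v ∈ V, v ∈ Set.range ip ∩ Set.range iq := by
            intro v hv
            have hvne : v ≠ m := by
              have : v ∈ Set.univ \ {m} := by rw [← hUV]; exact Or.inr hv
              exact this.2
            rcases hcov v with h1 | h1
            · by_cases h2 : v ∈ Set.range iq
              · exact ⟨h1, h2⟩
              · exact (hdisj v (hAU v ⟨h1, h2⟩ hvne) hv).elim
            · by_cases h2 : v ∈ Set.range ip
              · exact ⟨h2, h1⟩
              · exact (hdisj v (hBU v ⟨h1, h2⟩) hv).elim
          obtain ⟨x, hxV, y, hyV, hxy⟩ := ShT_two (n+1) (by omega) _ V hTV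
          exact hxy.ne (fW x y (hVW x hxV) (hVW y hyV) hxy.le)
        have hAm : ∀ a', a' ∈ Set.range ip \ Set.range iq → a' = m := by
          intro a' ha'
          by_contra hne
          have hmem : a' ∈ U ∪ V := by rw [hUV]; exact ⟨trivial, hne⟩
          rcases hmem with h1 | h1
          · exact key U V hUV hinc hTV a' ha' hne h1
          · exact key V U (by rw [Set.union_comm]; exact hUV)
              (fun u hu v hv => ⟨(hinc v hv u hu).2, (hinc v hv u hu).1⟩) hTU a' ha' hne h1
        have hma : m ∈ Set.range ip \ Set.range iq := by
          have := hAm a ⟨haP, hanq⟩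
          rw [← this]; exact ⟨haP, hanq⟩
        have hIQ : Set.range iq = Set.univ \ {m} := by
          apply Set.eq_of_subset_of_subset
          · intro r hr
            exact ⟨trivial, fun he => hma.2 ((show r = m from he) ▸ hr)⟩
          · rintro r ⟨-, hrm⟩
            rcases hcov r with h1 | h1
            · by_cases h2 : r ∈ Set.range iq
              · exact h2
              · exact absurd (hAm r ⟨h1, h2⟩) hrm
            · exact h1
        refine htransD (n+1) ?_
        rw [hIQ]
        exact ⟨U, V, hUV, hinc, hTU, hTV⟩

end GlueAnalysis
section Closures

theorem parcl_reduce {C : Iposet → Prop} {R : Iposet} (h : ParCl C R) :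
    ∀ n, 1 ≤ n →
      (ShT n R.carrier Set.univ → ∃ P', C P' ∧ ShT n P'.carrier Set.univ) ∧
      (ShD n R.carrier Set.univ →
        ∃ P', C P' ∧ (ShT n P'.carrier Set.univ ∨ ShD n P'.carrier Set.univ)) := by
  induction h with
  | of h => exact fun n hn => ⟨fun hT => ⟨_, h, hT⟩, fun hD => ⟨_, h, Or.inr hD⟩⟩
  | empty h =>
    intro n hn
    constructor
    · intro hT
      obtain ⟨x, -⟩ := ShT_two n hn _ _ hT
      exact (h.1.false x).elim
    · rintro ⟨U, V, hUV, hinc, hTU, hTV⟩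
      obtain ⟨x, -⟩ := ShT_two n hn _ _ hTU
      exact (h.1.false x).elim
  | par hP hQ hpar ihP ihQ =>
    rename_i P Q R'
    obtain ⟨hn', hm', ip, iq, hipinj, hiqinj, hcover, hnei, hord, -, -, -, -⟩ := hpar
    have hipord : ∀ x y, x ≤ y ↔ ip x ≤ ip y := by
      intro x y
      constructor
      · intro hxy; exact (hord _ _).2 (Or.inl ⟨x, y, rfl, rfl, hxy⟩)
      · intro hxy
        rcases (hord _ _).1 hxy with ⟨a, b, hua, hvb, hab⟩ | ⟨a, b, hua, hvb, hab⟩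
        · rw [hipinj hua, hipinj hvb]; exact hab
        · exact absurd hua (hnei x a)
    have hiqord : ∀ x y, x ≤ y ↔ iq x ≤ iq y := by
      intro x y
      constructor
      · intro hxy; exact (hord _ _).2 (Or.inr ⟨x, y, rfl, rfl, hxy⟩)
      · intro hxy
        rcases (hord _ _).1 hxy with ⟨a, b, hua, hvb, hab⟩ | ⟨a, b, hua, hvb, hab⟩
        · exact absurd hua.symm (hnei a x)
        · rw [hiqinj hua, hiqinj hvb]; exact hab
    have hcov : ∀ r, r ∈ Set.range ip ∪ Set.range iq := by
      intro r
      rcases hcover r with ⟨x, rfl⟩ | ⟨y, rfl⟩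
      · exact Or.inl ⟨x, rfl⟩
      · exact Or.inr ⟨y, rfl⟩
    have hcross : ∀ u v : R'.carrier, u ∈ Set.range ip → v ∈ Set.range iq → ¬ u ≤ v ∧ ¬ v ≤ u := by
      rintro u v ⟨x, rfl⟩ ⟨y, rfl⟩
      constructor
      · intro hle
        rcases (hord _ _).1 hle with ⟨a, b, hua, hvb, -⟩ | ⟨a, b, hua, hvb, -⟩
        · exact hnei b y hvb.symm
        · exact hnei x a hua
      · intro hle
        rcases (hord _ _).1 hle with ⟨a, b, hua, hvb, -⟩ | ⟨a, b, hua, hvb, -⟩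
        · exact hnei a y hua.symm
        · exact hnei x b hvb
    have htT : ∀ k, ShT k R'.carrier (Set.range ip) → ShT k P.carrier Set.univ := by
      intro k hk
      have himg := ShT_image k hipinj hipord Set.univ
      rw [Set.image_univ] at himg
      exact himg.1 hk
    have htD : ∀ k, ShD k R'.carrier (Set.range ip) → ShD k P.carrier Set.univ := by
      intro k hk
      have himg := ShD_image k hipinj hipord Set.univ
      rw [Set.image_univ] at himg
      exact himg.1 hk
    have htT' : ∀ k, ShT k R'.carrier (Set.range iq) → ShT k Q.carrier Set.univ := by
      intro k hk
      have himg := ShT_image k hiqinj hiqord Set.univ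
      rw [Set.image_univ] at himg
      exact himg.1 hk
    have htD' : ∀ k, ShD k R'.carrier (Set.range iq) → ShD k Q.carrier Set.univ := by
      intro k hk
      have himg := ShD_image k hiqinj hiqord Set.univ
      rw [Set.image_univ] at himg
      exact himg.1 hk
    intro n hn
    constructor
    · intro hT
      rcases ShT_subset_or n hn R'.carrier hT (fun r _ => hcov r)
          (fun a ha b hb _ _ => hcross a b ha hb) with h1 | h1
      · exact (ihP n hn).1 (htT n (by rw [Set.eq_univ_of_forall fun r => h1 trivial]; exact hT))
      · exact (ihQ n hn).1 (htT' n (by rw [Set.eq_univ_of_forall fun r => h1 trivial]; exact hT))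
    · rintro ⟨U, V, hUV, hinc, hTU, hTV⟩
      have hUcov : U ⊆ Set.range ip ∪ Set.range iq := fun u _ => hcov u
      have hVcov : V ⊆ Set.range ip ∪ Set.range iq := fun u _ => hcov u
      have hdisj : ∀ r, r ∈ Set.range ip → r ∈ Set.range iq → False := by
        rintro r ⟨x, rfl⟩ ⟨y, hy⟩
        exact hnei x y hy.symm
      rcases ShT_subset_or n hn R'.carrier hTU hUcov
          (fun a ha b hb _ _ => hcross a b ha hb) with hU1 | hU1 <;>
        rcases ShT_subset_or n hn R'.carrier hTV hVcov
          (fun a ha b hb _ _ => hcross a b ha hb) with hV1 | hV1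
      · -- both in P
        have hIP : Set.range ip = Set.univ := by
          apply Set.eq_univ_of_forall
          intro r
          rcases hcov r with h1 | h1
          · exact h1
          · have : r ∈ U ∪ V := by rw [hUV]; trivial
            rcases this with h2 | h2
            · exact (hdisj r (hU1 h2) h1).elim
            · exact (hdisj r (hV1 h2) h1).elim
        obtain ⟨P', hC, hsh⟩ := (ihP n hn).2 (htD n (by rw [hIP]; exact ⟨U, V, hUV, hinc, hTU, hTV⟩))
        exact ⟨P', hC, hsh⟩
      · -- U in P, V in Q
        have hU : U = Set.range ip := by
          apply Set.eq_of_subset_of_subset hU1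
          intro r hr
          have : r ∈ U ∪ V := by rw [hUV]; trivial
          rcases this with h2 | h2
          · exact h2
          · exact (hdisj r hr (hV1 h2)).elim
        obtain ⟨P', hC, hsh⟩ := (ihP n hn).1 (htT n (hU ▸ hTU))
        exact ⟨P', hC, Or.inl hsh⟩
      · -- U in Q, V in P
        have hV : V = Set.range ip := by
          apply Set.eq_of_subset_of_subset hV1
          intro r hr
          have : r ∈ U ∪ V := by rw [hUV]; trivial
          rcases this with h2 | h2
          · exact (hdisj r hr (hU1 h2)).elim
          · exact h2
        obtain ⟨P', hC, hsh⟩ := (ihP n hn).1 (htT n (hV ▸ hTV))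
        exact ⟨P', hC, Or.inl hsh⟩
      · -- both in Q
        have hIQ : Set.range iq = Set.univ := by
          apply Set.eq_univ_of_forall
          intro r
          rcases hcov r with h1 | h1
          · have : r ∈ U ∪ V := by rw [hUV]; trivial
            rcases this with h2 | h2
            · exact (hdisj r h1 (hU1 h2)).elim
            · exact (hdisj r h1 (hV1 h2)).elim
          · exact h1
        obtain ⟨P', hC, hsh⟩ := (ihQ n hn).2 (htD' n (by rw [hIQ]; exact ⟨U, V, hUV, hinc, hTU, hTV⟩))
        exact ⟨P', hC, hsh⟩

theorem gluecl_bound {C : Iposet → Prop} {j : ℕ} (hj : 1 ≤ j)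
    (HT : ∀ P, C P → ∀ n, 1 ≤ n → ShT n P.carrier Set.univ → 2*n ≤ j)
    (HD : ∀ P, C P → ∀ n, 1 ≤ n → ShD n P.carrier Set.univ → 2*n+1 ≤ j) :
    ∀ {R}, GlueCl C R → ∀ n, 1 ≤ n →
      (ShT n R.carrier Set.univ → 2*n ≤ j+1) ∧
      (ShD n R.carrier Set.univ → 2*n+1 ≤ j) := by
  intro R h
  induction h with
  | of h =>
    exact fun n hn =>
      ⟨fun hT => le_trans (HT _ h n hn hT) (by omega), fun hD => HD _ h n hn hD⟩
  | glue hX hY hglue ihX ihY =>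
    intro n hn
    constructor
    · intro hT
      match n, hn, hT with
      | 1, _, _ => omega
      | (k+2), _, hT =>
        rcases (glue_main hglue).2 k hT with h1 | h1 | h1
        · exact (ihY (k+2) (by omega)).1 h1
        · exact (ihX (k+2) (by omega)).1 h1
        · have := (ihY (k+1) (by omega)).2 h1
          omega
    · intro hD
      obtain ⟨k, rfl⟩ : ∃ k, n = k+1 := ⟨n-1, by omega⟩
      rcases (glue_main hglue).1 k hD with h1 | h1
      · exact (ihY (k+1) (by omega)).2 h1
      · exact (ihX (k+1) (by omega)).2 h1

theorem Cc_succ_even (j : ℕ) (h : j % 2 = 0) : Cc (j+1) = ParCl (Cc j) := by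
  simp [Cc, h]

theorem Cc_succ_odd (j : ℕ) (h : j % 2 = 1) : Cc (j+1) = GlueCl (Cc j) := by
  simp [Cc, h]

theorem master : ∀ (k : ℕ) (P : Iposet), Cc k P → ∀ n, 1 ≤ n →
    (ShT n P.carrier Set.univ → 2*n ≤ k) ∧ (ShD n P.carrier Set.univ → 2*n+1 ≤ k) := by
  intro k
  induction k using Nat.strong_induction_on with
  | _ k ih =>
    match k with
    | 0 =>
      intro P hP n hn
      obtain ⟨x0, hx0⟩ := hP
      constructor
      · intro hT
        obtain ⟨x, -, y, -, hxy⟩ := ShT_two n hn _ _ hT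
        rw [hx0 x, hx0 y] at hxy
        exact absurd rfl hxy.ne
      · rintro ⟨U, V, hUV, hinc, hTU, hTV⟩
        obtain ⟨x, -, y, -, hxy⟩ := ShT_two n hn _ _ hTU
        rw [hx0 x, hx0 y] at hxy
        exact absurd rfl hxy.ne
    | (j+1) =>
      intro P hP n hn
      by_cases hj : j % 2 = 0
      · rw [Cc_succ_even j hj] at hP
        have hred := parcl_reduce hP n hn
        constructor
        · intro hT
          obtain ⟨P', hC, hsh⟩ := hred.1 hT
          have := (ih j (by omega) P' hC n hn).1 hsh
          omega
        · intro hD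
          obtain ⟨P', hC, hsh⟩ := hred.2 hD
          rcases hsh with h1 | h1
          · have := (ih j (by omega) P' hC n hn).1 h1; omega
          · have := (ih j (by omega) P' hC n hn).2 h1; omega
      · have hj' : j % 2 = 1 := by omega
        rw [Cc_succ_odd j hj'] at hP
        have hb := gluecl_bound (by omega : 1 ≤ j)
          (fun P hC n hn hT => (ih j (by omega) P hC n hn).1 hT)
          (fun P hC n hn hD => (ih j (by omega) P hC n hn).2 hD) hP n hn
        exact ⟨fun hT => by have := hb.1 hT; omega, fun hD => by have := hb.2 hD; omega⟩

end Closures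
section Positive

theorem Cc_mono {k : ℕ} {P : Iposet} (h : Cc k P) : Cc (k+1) P := by
  by_cases hj : k % 2 = 0
  · rw [Cc_succ_even k hj]; exact ParCl.of h
  · rw [Cc_succ_odd k (by omega)]; exact GlueCl.of h

theorem Cc_mono_le {k l : ℕ} (hkl : k ≤ l) {P : Iposet} (h : Cc k P) : Cc l P := by
  induction hkl with
  | refl => exact h
  | step _ ih => exact Cc_mono ih

theorem pseq_ge_one {n : ℕ} {R : Iposet} (h : IsPseq n R) : 1 ≤ n := by
  induction h with
  | one _ _ _ => exact le_refl 1
  | succ _ _ _ _ _ _ _ => omega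

theorem pseq_pos {n : ℕ} {R : Iposet} (h : IsPseq n R) : Cc (2*n) R := by
  induction h with
  | one hS hS' hglue =>
    have h1 : ∀ T : Iposet, IsSingl0 T → Cc 1 T := by
      intro T hT
      rw [show (1:ℕ) = 0 + 1 from rfl, Cc_succ_even 0 rfl]
      exact ParCl.of hT.1
    show Cc 2 _
    rw [show (2:ℕ) = 1 + 1 from rfl, Cc_succ_odd 1 rfl]
    exact GlueCl.glue (GlueCl.of (h1 _ hS)) (GlueCl.of (h1 _ hS')) hglue
  | succ hS hA hB hpar hglue ihA ihB =>
    rename_i n' S' A' B' C' R''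
    have hC : Cc (2*n'+1) C' := by
      rw [Cc_succ_even (2*n') (by omega)]
      exact ParCl.par (ParCl.of ihA) (ParCl.of ihB) hpar
    have hSc : Cc (2*n'+1) S' := Cc_mono_le (by omega) (show Cc 0 S' from hS.1)
    have hR : Cc (2*n'+1+1) R'' := by
      rw [Cc_succ_odd (2*n'+1) (by omega)]
      exact GlueCl.glue (GlueCl.of hSc) (GlueCl.of hC) hglue
    have he : 2*(n'+1) = 2*n'+1+1 := by omega
    rw [he]
    exact hR

theorem par_shape {A B C : Iposet} (hpar : Iposet.IsParallel A B C) {n : ℕ}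
    (hA : ShT n A.carrier Set.univ) (hB : ShT n B.carrier Set.univ) :
    ShD n C.carrier Set.univ := by
  obtain ⟨hn', hm', ip, iq, hipinj, hiqinj, hcover, hnei, hord, -, -, -, -⟩ := hpar
  have hipord : ∀ x y, x ≤ y ↔ ip x ≤ ip y := by
    intro x y
    constructor
    · intro hxy; exact (hord _ _).2 (Or.inl ⟨x, y, rfl, rfl, hxy⟩)
    · intro hxy
      rcases (hord _ _).1 hxy with ⟨a, b, hua, hvb, hab⟩ | ⟨a, b, hua, hvb, hab⟩
      · rw [hipinj hua, hipinj hvb]; exact hab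
      · exact absurd hua (hnei x a)
  have hiqord : ∀ x y, x ≤ y ↔ iq x ≤ iq y := by
    intro x y
    constructor
    · intro hxy; exact (hord _ _).2 (Or.inr ⟨x, y, rfl, rfl, hxy⟩)
    · intro hxy
      rcases (hord _ _).1 hxy with ⟨a, b, hua, hvb, hab⟩ | ⟨a, b, hua, hvb, hab⟩
      · exact absurd hua.symm (hnei a x)
      · rw [hiqinj hua, hiqinj hvb]; exact hab
  have hcross : ∀ u v : C.carrier, u ∈ Set.range ip → v ∈ Set.range iq →
      ¬ u ≤ v ∧ ¬ v ≤ u := by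
    rintro u v ⟨x, rfl⟩ ⟨y, rfl⟩
    constructor
    · intro hle
      rcases (hord _ _).1 hle with ⟨a, b, hua, hvb, -⟩ | ⟨a, b, hua, hvb, -⟩
      · exact hnei b y hvb.symm
      · exact hnei x a hua
    · intro hle
      rcases (hord _ _).1 hle with ⟨a, b, hua, hvb, -⟩ | ⟨a, b, hua, hvb, -⟩
      · exact hnei a y hua.symm
      · exact hnei x b hvb
  refine ⟨Set.range ip, Set.range iq, ?_, fun u hu v hv => hcross u v hu hv, ?_, ?_⟩
  · apply Set.eq_univ_of_forall
    intro r
    rcases hcover r with ⟨x, rfl⟩ | ⟨y, rfl⟩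
    · exact Or.inl ⟨x, rfl⟩
    · exact Or.inr ⟨y, rfl⟩
  · have himg := ShT_image n hipinj hipord Set.univ
    rw [Set.image_univ] at himg
    exact himg.2 hA
  · have himg := ShT_image n hiqinj hiqord Set.univ
    rw [Set.image_univ] at himg
    exact himg.2 hB

theorem glue_singleton_facts {S C R : Iposet} (hs : IsSingl0 S)
    (hglue : Iposet.IsGluing S C R) :
    ∃ (m0 : R.carrier) (iq : C.carrier → R.carrier),
      Function.Injective iq ∧ (∀ x y, x ≤ y ↔ iq x ≤ iq y) ∧
      Set.range iq = Set.univ \ {m0} ∧ m0 ∉ Set.range iq ∧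
      (∀ r : R.carrier, r ≠ m0 → m0 < r) := by
  obtain ⟨⟨x0, hx0⟩, hSn, hSm⟩ := hs
  obtain ⟨h, hn, hm, ip, iq, hipinj, hiqinj, hcover, hid1, hid2, hord, -, -⟩ := hglue
  have hCn : C.n = 0 := by omega
  have hdisj : ∀ x y, ip x ≠ iq y := by
    intro x y heq
    obtain ⟨i, -, -⟩ := hid2 x y heq
    exact absurd i.isLt (by omega)
  have hnt : ∀ x : S.carrier, x ∉ Set.range S.t := by
    rintro x ⟨i, -⟩
    exact absurd i.isLt (by omega)
  have hns : ∀ y : C.carrier, y ∉ Set.range C.s := by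
    rintro y ⟨j, -⟩
    exact absurd j.isLt (by omega)
  have hlt : ∀ y : C.carrier, ip x0 < iq y := by
    intro y
    have hle : ip x0 ≤ iq y :=
      (hord _ _).2 (Or.inr (Or.inr ⟨x0, y, rfl, rfl, hnt x0, hns y⟩))
    exact lt_of_le_of_ne hle (hdisj x0 y)
  have hiqord : ∀ x y, x ≤ y ↔ iq x ≤ iq y := by
    intro x y
    constructor
    · intro hxy; exact (hord _ _).2 (Or.inr (Or.inl ⟨x, y, rfl, rfl, hxy⟩))
    · intro hxy
      rcases (hord _ _).1 hxy with ⟨a, b, hua, hvb, hab⟩ | ⟨a, b, hua, hvb, hab⟩ |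
        ⟨a, b, hua, hvb, -, -⟩
      · exact absurd hua.symm (hdisj a x)
      · rw [hiqinj hua, hiqinj hvb]; exact hab
      · exact absurd hua.symm (hdisj a x)
  have hrange : Set.range iq = Set.univ \ {ip x0} := by
    apply Set.eq_of_subset_of_subset
    · rintro r ⟨y, rfl⟩
      exact ⟨trivial, fun he => hdisj x0 y ((show iq y = ip x0 from he)).symm⟩
    · rintro r ⟨-, hr⟩
      rcases hcover r with ⟨x, rfl⟩ | ⟨y, rfl⟩
      · exact absurd (by rw [hx0 x]; exact rfl) hr
      · exact ⟨y, rfl⟩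
  refine ⟨ip x0, iq, hiqinj, hiqord, hrange, ?_, ?_⟩
  · rintro ⟨y, hy⟩
    exact hdisj x0 y hy.symm
  · intro r hr
    rcases hcover r with ⟨x, rfl⟩ | ⟨y, rfl⟩
    · exact absurd (by rw [hx0 x]) hr
    · exact hlt y

theorem pseq_shape {n : ℕ} {R : Iposet} (h : IsPseq n R) :
    ShT n R.carrier Set.univ := by
  induction h with
  | one hS hS' hglue =>
    obtain ⟨m0, iq, hiqinj, hiqord, hrange, hm0, hlt⟩ := glue_singleton_facts hS hglue
    obtain ⟨⟨y0, hy0⟩, -, -⟩ := hS'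
    refine ⟨m0, iq y0, hlt (iq y0) (fun he => hm0 (he ▸ ⟨y0, rfl⟩)), ?_⟩
    apply Set.eq_of_subset_of_subset
    · intro r _
      by_cases hr : r = m0
      · exact Or.inl hr
      · have : r ∈ Set.range iq := by rw [hrange]; exact ⟨trivial, hr⟩
        obtain ⟨y, rfl⟩ := this
        exact Or.inr (by rw [hy0 y]; exact rfl)
    · exact fun r _ => trivial
  | succ hS hA hB hpar hglue ihA ihB =>
    rename_i n' S' A' B' C' R''
    have hn1 : 1 ≤ n' := pseq_ge_one hA
    have hD : ShD n' C'.carrier Set.univ := par_shape hpar ihA ihB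
    obtain ⟨m0, iq, hiqinj, hiqord, hrange, hm0, hlt⟩ := glue_singleton_facts hS hglue
    rw [ShT_succ_iff n' hn1]
    refine ⟨m0, trivial, fun x _ hx => hlt x hx, ?_⟩
    rw [← hrange]
    have himg := ShD_image n' hiqinj hiqord Set.univ
    rw [Set.image_univ] at himg
    exact himg.2 hD

end Positive
section Witness

/-- Serial (ordinal sum) order on a disjoint union. -/
def serPO (α β : Type) [PartialOrder α] [PartialOrder β] : PartialOrder (α ⊕ β) where
  le x y := match x, y with
    | Sum.inl a, Sum.inl b => a ≤ b
    | Sum.inr a, Sum.inr b => a ≤ b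
    | Sum.inl _, Sum.inr _ => True
    | Sum.inr _, Sum.inl _ => False
  lt x y := (match x, y with
    | Sum.inl a, Sum.inl b => a ≤ b
    | Sum.inr a, Sum.inr b => a ≤ b
    | Sum.inl _, Sum.inr _ => True
    | Sum.inr _, Sum.inl _ => False) ∧ ¬ (match y, x with
    | Sum.inl a, Sum.inl b => a ≤ b
    | Sum.inr a, Sum.inr b => a ≤ b
    | Sum.inl _, Sum.inr _ => True
    | Sum.inr _, Sum.inl _ => False)
  lt_iff_le_not_ge := fun _ _ => Iff.rfl
  le_refl x := by cases x <;> exact le_refl _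
  le_trans x y z hxy hyz := by
    rcases x with a | a <;> rcases y with b | b <;> rcases z with c | c <;>
      first
      | exact trivial
      | exact hxy.elim
      | exact hyz.elim
      | exact le_trans hxy hyz
  le_antisymm x y h1 h2 := by
    rcases x with a | a <;> rcases y with b | b <;>
      first
      | exact h1.elim
      | exact h2.elim
      | exact congrArg Sum.inl (le_antisymm h1 h2)
      | exact congrArg Sum.inr (le_antisymm h1 h2)

/-- Parallel (disjoint union) order on a disjoint union. -/
def parPO (α β : Type) [PartialOrder α] [PartialOrder β] : PartialOrder (α ⊕ β) where
  le x y := match x, y with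
    | Sum.inl a, Sum.inl b => a ≤ b
    | Sum.inr a, Sum.inr b => a ≤ b
    | Sum.inl _, Sum.inr _ => False
    | Sum.inr _, Sum.inl _ => False
  lt x y := (match x, y with
    | Sum.inl a, Sum.inl b => a ≤ b
    | Sum.inr a, Sum.inr b => a ≤ b
    | Sum.inl _, Sum.inr _ => False
    | Sum.inr _, Sum.inl _ => False) ∧ ¬ (match y, x with
    | Sum.inl a, Sum.inl b => a ≤ b
    | Sum.inr a, Sum.inr b => a ≤ b
    | Sum.inl _, Sum.inr _ => False
    | Sum.inr _, Sum.inl _ => False)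
  lt_iff_le_not_ge := fun _ _ => Iff.rfl
  le_refl x := by cases x <;> exact le_refl _
  le_trans x y z hxy hyz := by
    rcases x with a | a <;> rcases y with b | b <;> rcases z with c | c <;>
      first
      | exact hxy.elim
      | exact hyz.elim
      | exact le_trans hxy hyz
  le_antisymm x y h1 h2 := by
    rcases x with a | a <;> rcases y with b | b <;>
      first
      | exact h1.elim
      | exact h2.elim
      | exact congrArg Sum.inl (le_antisymm h1 h2)
      | exact congrArg Sum.inr (le_antisymm h1 h2)

/-- The singleton iposet with empty interfaces. -/
def ptIp : Iposet where
  n := 0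
  m := 0
  carrier := PUnit
  str := inferInstance
  fin := inferInstance
  s := Fin.elim0
  t := Fin.elim0
  s_inj := fun i => i.elim0
  t_inj := fun i => i.elim0
  s_min := fun i => i.elim0
  t_max := fun i => i.elim0

theorem ptIp_singl0 : IsSingl0 ptIp := ⟨⟨PUnit.unit, fun _ => rfl⟩, rfl, rfl⟩

/-- Serial composition (with empty interfaces). -/
def serIp (P Q : Iposet) : Iposet where
  n := 0
  m := 0
  carrier := P.carrier ⊕ Q.carrier
  str := serPO P.carrier Q.carrier
  fin := inferInstance
  s := Fin.elim0
  t := Fin.elim0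
  s_inj := fun i => i.elim0
  t_inj := fun i => i.elim0
  s_min := fun i => i.elim0
  t_max := fun i => i.elim0

/-- Parallel composition (with empty interfaces). -/
def parIp (P Q : Iposet) : Iposet where
  n := 0
  m := 0
  carrier := P.carrier ⊕ Q.carrier
  str := parPO P.carrier Q.carrier
  fin := inferInstance
  s := Fin.elim0
  t := Fin.elim0
  s_inj := fun i => i.elim0
  t_inj := fun i => i.elim0
  s_min := fun i => i.elim0
  t_max := fun i => i.elim0

theorem serIp_isGluing {P Q : Iposet} (hPn : P.n = 0) (hPm : P.m = 0)
    (hQn : Q.n = 0) (hQm : Q.m = 0) : Iposet.IsGluing P Q (serIp P Q) := by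
  refine ⟨by omega, by exact hPn.symm, by exact hQm.symm, Sum.inl, Sum.inr,
    Sum.inl_injective, Sum.inr_injective, ?_, ?_, ?_, ?_, ?_, ?_⟩
  · rintro (x | y)
    · exact Or.inl ⟨x, rfl⟩
    · exact Or.inr ⟨y, rfl⟩
  · intro i; exact absurd i.isLt (by omega)
  · intro x y heq; exact absurd heq (by simp)
  · rintro (a | a) (b | b)
    · constructor
      · intro hle
        exact Or.inl ⟨a, b, rfl, rfl, hle⟩
      · rintro (⟨x, y, hx, hy, hxy⟩ | ⟨x, y, hx, hy, hxy⟩ | ⟨x, y, hx, hy, -, -⟩)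
        · injection hx with hx; injection hy with hy
          rw [hx, hy]; exact hxy
        · exact absurd hx (by simp)
        · exact absurd hy (by simp)
    · constructor
      · intro hle
        refine Or.inr (Or.inr ⟨a, b, rfl, rfl, ?_, ?_⟩)
        · rintro ⟨i, -⟩; exact absurd i.isLt (by omega)
        · rintro ⟨j, -⟩; exact absurd j.isLt (by omega)
      · intro h'
        exact trivial
    · constructor
      · intro hle
        exact hle.elim
      · rintro (⟨x, y, hx, hy, hxy⟩ | ⟨x, y, hx, hy, hxy⟩ | ⟨x, y, hx, hy, -, -⟩)
        · exact absurd hx (by simp)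
        · exact absurd hy (by simp)
        · exact absurd hx (by simp)
    · constructor
      · intro hle
        exact Or.inr (Or.inl ⟨a, b, rfl, rfl, hle⟩)
      · rintro (⟨x, y, hx, hy, hxy⟩ | ⟨x, y, hx, hy, hxy⟩ | ⟨x, y, hx, hy, -, -⟩)
        · exact absurd hx (by simp)
        · injection hx with hx; injection hy with hy
          rw [hx, hy]; exact hxy
        · exact absurd hx (by simp)
  · intro i; exact i.elim0
  · intro i; exact i.elim0

theorem parIp_isParallel {P Q : Iposet} (hPn : P.n = 0) (hPm : P.m = 0)
    (hQn : Q.n = 0) (hQm : Q.m = 0) : Iposet.IsParallel P Q (parIp P Q) := by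
  refine ⟨by show P.n + Q.n = 0; omega, by show P.m + Q.m = 0; omega, Sum.inl, Sum.inr,
    Sum.inl_injective, Sum.inr_injective, ?_, ?_, ?_, ?_, ?_, ?_, ?_⟩
  · rintro (x | y)
    · exact Or.inl ⟨x, rfl⟩
    · exact Or.inr ⟨y, rfl⟩
  · intro x y heq; exact absurd heq (by simp)
  · rintro (a | a) (b | b)
    · constructor
      · intro hle
        exact Or.inl ⟨a, b, rfl, rfl, hle⟩
      · rintro (⟨x, y, hx, hy, hxy⟩ | ⟨x, y, hx, hy, hxy⟩)
        · injection hx with hx; injection hy with hy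
          rw [hx, hy]; exact hxy
        · exact absurd hx (by simp)
    · constructor
      · intro hle
        exact hle.elim
      · rintro (⟨x, y, hx, hy, hxy⟩ | ⟨x, y, hx, hy, hxy⟩)
        · exact absurd hy (by simp)
        · exact absurd hx (by simp)
    · constructor
      · intro hle
        exact hle.elim
      · rintro (⟨x, y, hx, hy, hxy⟩ | ⟨x, y, hx, hy, hxy⟩)
        · exact absurd hx (by simp)
        · exact absurd hy (by simp)
    · constructor
      · intro hle
        exact Or.inr ⟨a, b, rfl, rfl, hle⟩
      · rintro (⟨x, y, hx, hy, hxy⟩ | ⟨x, y, hx, hy, hxy⟩)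
        · exact absurd hx (by simp)
        · injection hx with hx; injection hy with hy
          rw [hx, hy]; exact hxy
  · intro i; exact absurd i.isLt (by omega)
  · intro j; exact absurd j.isLt (by omega)
  · intro i; exact absurd i.isLt (by omega)
  · intro j; exact absurd j.isLt (by omega)

/-- The witness sequence of iposets. -/
def Pw : ℕ → Iposet
  | 0 => ptIp
  | 1 => serIp ptIp ptIp
  | (k+2) => serIp ptIp (parIp (Pw (k+1)) (Pw (k+1)))

theorem Pw_interfaces : ∀ k, (Pw k).n = 0 ∧ (Pw k).m = 0
  | 0 => ⟨rfl, rfl⟩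
  | 1 => ⟨rfl, rfl⟩
  | (_+2) => ⟨rfl, rfl⟩

theorem pw_pseq : ∀ n, 1 ≤ n → IsPseq n (Pw n)
  | 1, _ => IsPseq.one ptIp_singl0 ptIp_singl0 (serIp_isGluing rfl rfl rfl rfl)
  | (k+2), _ => by
    have hk := pw_pseq (k+1) (by omega)
    have h1 := Pw_interfaces (k+1)
    exact IsPseq.succ ptIp_singl0 hk hk
      (parIp_isParallel h1.1 h1.2 h1.1 h1.2)
      (serIp_isGluing rfl rfl rfl rfl)

end Witness

/-- The hierarchy does not collapse: `P_n ∈ C_{2n} \ C_{2n-1}` for all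
`n ≥ 1`, hence `C_{2n-1} ⊊ C_{2n}`. -/
theorem hierarchy_does_not_collapse (n : ℕ) (hn : 1 ≤ n) :
    (∀ R : Iposet, IsPseq n R → Cc (2 * n) R ∧ ¬ Cc (2 * n - 1) R) ∧
    (∀ P : Iposet, Cc (2 * n - 1) P → Cc (2 * n) P) ∧
    (∃ P : Iposet, Cc (2 * n) P ∧ ¬ Cc (2 * n - 1) P) := by
  have part1 : ∀ R : Iposet, IsPseq n R → Cc (2 * n) R ∧ ¬ Cc (2 * n - 1) R := by
    intro R hR
    refine ⟨pseq_pos hR, ?_⟩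
    intro hC
    have := (master (2 * n - 1) R hC n hn).1 (pseq_shape hR)
    omega
  refine ⟨part1, ?_, ?_⟩
  · intro P hP
    obtain ⟨m, rfl⟩ : ∃ m, n = m + 1 := ⟨n - 1, by omega⟩
    have h1 : 2 * (m + 1) - 1 = 2 * m + 1 := by omega
    rw [h1] at hP
    have h2 : 2 * (m + 1) = (2 * m + 1) + 1 := by omega
    rw [h2, Cc_succ_odd (2 * m + 1) (by omega)]
    exact GlueCl.of hP
  · exact ⟨Pw n, part1 (Pw n) (pw_pseq n hn)⟩
end
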